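/- arXiv:1807.07444 — 7 statements merged into one kernel-verified Lean document; each statement's English description precedes it below -/
import Mathlib

section
/- Let s ∈ (0,1), let A : ℝ³ → ℝ³ be measurable and let u : ℝ³ → ℂ be measurable. Then the fractional diamagnetic inequality holds: ∬_{ℝ³×ℝ³} (|u(x)| − |u(y)|)² / |x−y|^{3+2s} dx dy ≤ ∬_{ℝ³×ℝ³} |u(x) − e^{i (x−y)·A((x+y)/2)} u(y)|² / |x−y|^{3+2s} dx dy (as an inequality of integrals with values in [0,∞]). -/
open MeasureTheory

noncomputable section

/-- The fractional diamagnetic inequality: the Gagliardo seminorm of `|u|` is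
bounded by the magnetic Gagliardo seminorm of `u`. -/
theorem fractional_diamagnetic_inequality
    (s : ℝ) (hs : s ∈ Set.Ioo (0 : ℝ) 1)
    (A : EuclideanSpace ℝ (Fin 3) → EuclideanSpace ℝ (Fin 3))
    (u : EuclideanSpace ℝ (Fin 3) → ℂ)
    (hA : Measurable A) (hu : Measurable u) :
    (∫⁻ x, ∫⁻ y,
        ENNReal.ofReal ((‖u x‖ - ‖u y‖) ^ 2 / ‖x - y‖ ^ (3 + 2 * s))) ≤
    (∫⁻ x, ∫⁻ y,
        ENNReal.ofReal (‖u x - Complex.exp (Complex.I *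
            ((inner ℝ (x - y) (A ((2 : ℝ)⁻¹ • (x + y))) : ℝ) : ℂ)) * u y‖ ^ 2 /
          ‖x - y‖ ^ (3 + 2 * s))) := by
  refine lintegral_mono fun x => lintegral_mono fun y => ENNReal.ofReal_le_ofReal ?_
  set c := Complex.exp (Complex.I *
      ((inner ℝ (x - y) (A ((2 : ℝ)⁻¹ • (x + y))) : ℝ) : ℂ)) with hc
  have hcnorm : ‖c‖ = 1 := by
    rw [hc, Complex.norm_exp]
    simp
  have key : (‖u x‖ - ‖u y‖) ^ 2 ≤ ‖u x - c * u y‖ ^ 2 := by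
    have h1 : |‖u x‖ - ‖c * u y‖| ≤ ‖u x - c * u y‖ := abs_norm_sub_norm_le _ _
    have h2 : ‖c * u y‖ = ‖u y‖ := by rw [norm_mul, hcnorm, one_mul]
    calc (‖u x‖ - ‖u y‖) ^ 2 = |‖u x‖ - ‖c * u y‖| ^ 2 := by rw [h2, sq_abs]
      _ ≤ ‖u x - c * u y‖ ^ 2 := by
          exact pow_le_pow_left₀ (abs_nonneg _) h1 2
  exact div_le_div_of_nonneg_right key (by positivity) |>.trans_eq rfl
end
end

section
/- Let s ∈ (0,1), α ∈ (0,1], and let A : ℝ³ → ℝ³ satisfy |A(x) − A(y)| ≤ C_A |x−y|^α for all x, y ∈ ℝ³ and some C_A > 0. Let u : ℝ³ → ℝ be measurable with compact support, ∫_{ℝ³} u(x)² dx < ∞ and ∬_{ℝ³×ℝ³} (u(x) − u(y))²/|x−y|^{3+2s} dx dy < ∞. Then the function w(x) = e^{i A(0)·x} u(x) has finite magnetic Gagliardo seminorm: ∬_{ℝ³×ℝ³} |w(x) − e^{i(x−y)·A((x+y)/2)} w(y)|²/|x−y|^{3+2s} dx dy < ∞. -/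
open MeasureTheory

noncomputable section

open Metric
open scoped ENNReal


lemma lintegral_ball_rpow_neg_lt_top {ρ : ℝ} (hρ0 : 0 < ρ) (hρ3 : ρ < 3) :
    ∫⁻ z : EuclideanSpace ℝ (Fin 3) in Metric.closedBall 0 1,
      ENNReal.ofReal (‖z‖ ^ (-ρ)) < ⊤ := by
  set μ := volume.restrict (Metric.closedBall (0 : EuclideanSpace ℝ (Fin 3)) 1) with hμ
  have f_nn : 0 ≤ᵐ[μ] fun z : EuclideanSpace ℝ (Fin 3) => ‖z‖ ^ (-ρ) :=
    ae_of_all _ fun z => Real.rpow_nonneg (norm_nonneg z) _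
  have f_mble : AEMeasurable (fun z : EuclideanSpace ℝ (Fin 3) => ‖z‖ ^ (-ρ)) μ :=
    by measurability
  rw [show (∫⁻ z : EuclideanSpace ℝ (Fin 3) in Metric.closedBall 0 1,
      ENNReal.ofReal (‖z‖ ^ (-ρ))) = ∫⁻ z, ENNReal.ofReal (‖z‖ ^ (-ρ)) ∂μ from rfl,
    lintegral_eq_lintegral_meas_lt μ f_nn f_mble]
  have key : ∀ t : ℝ, 0 < t → μ {a : EuclideanSpace ℝ (Fin 3) | t < ‖a‖ ^ (-ρ)} ≤
      min (volume (Metric.closedBall (0 : EuclideanSpace ℝ (Fin 3)) 1))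
        (ENNReal.ofReal (t ^ (-(3 / ρ))) *
          volume (Metric.ball (0 : EuclideanSpace ℝ (Fin 3)) 1)) := by
    intro t ht
    refine le_min ?_ ?_
    · calc μ _ ≤ μ Set.univ := measure_mono (Set.subset_univ _)
      _ = volume (Metric.closedBall (0 : EuclideanSpace ℝ (Fin 3)) 1) := by
        rw [hμ, Measure.restrict_apply_univ]
    · have hsub : {a : EuclideanSpace ℝ (Fin 3) | t < ‖a‖ ^ (-ρ)} ⊆
          Metric.ball 0 (t ^ (-(1 / ρ))) := by
        intro a ha
        simp only [Set.mem_setOf_eq] at ha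
        have ha0 : a ≠ 0 := by
          rintro rfl
          rw [norm_zero, Real.zero_rpow (neg_ne_zero.2 hρ0.ne')] at ha
          linarith
        have hna : 0 < ‖a‖ := norm_pos_iff.2 ha0
        rw [mem_ball_zero_iff]
        have h1 : ‖a‖ ^ ρ < t⁻¹ := by
          rw [Real.rpow_neg hna.le] at ha
          rwa [lt_inv_comm₀ ht (Real.rpow_pos_of_pos hna ρ)] at ha
        have h2 : (‖a‖ ^ ρ) ^ (1 / ρ) < t⁻¹ ^ (1 / ρ) :=
          Real.rpow_lt_rpow (Real.rpow_pos_of_pos hna ρ).le h1 (by positivity)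
        rwa [← Real.rpow_mul hna.le, mul_one_div, div_self hρ0.ne', Real.rpow_one,
          ← Real.rpow_neg_one t, ← Real.rpow_mul ht.le, neg_one_mul] at h2
      calc μ _ ≤ volume {a : EuclideanSpace ℝ (Fin 3) | t < ‖a‖ ^ (-ρ)} :=
            Measure.restrict_le_self _
        _ ≤ volume (Metric.ball (0 : EuclideanSpace ℝ (Fin 3)) (t ^ (-(1 / ρ)))) :=
            measure_mono hsub
        _ = ENNReal.ofReal ((t ^ (-(1 / ρ))) ^ (3:ℕ)) *
              volume (Metric.ball (0 : EuclideanSpace ℝ (Fin 3)) 1) := by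
            rw [Measure.addHaar_ball volume _ (Real.rpow_nonneg ht.le _)]
            simp
        _ = ENNReal.ofReal (t ^ (-(3 / ρ))) *
              volume (Metric.ball (0 : EuclideanSpace ℝ (Fin 3)) 1) := by
            rw [← Real.rpow_natCast (t ^ (-(1/ρ))) 3, ← Real.rpow_mul ht.le]
            norm_num
            ring_nf
  calc (∫⁻ t in Set.Ioi (0:ℝ), μ {a : EuclideanSpace ℝ (Fin 3) | t < ‖a‖ ^ (-ρ)})
      ≤ ∫⁻ t in Set.Ioc (0:ℝ) 1 ∪ Set.Ioi 1, μ {a | t < ‖a‖ ^ (-ρ)} :=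
        lintegral_mono_set (by
          intro t ht
          rcases le_or_gt t 1 with h | h
          · exact Or.inl ⟨ht, h⟩
          · exact Or.inr h)
    _ ≤ (∫⁻ t in Set.Ioc (0:ℝ) 1, μ {a | t < ‖a‖ ^ (-ρ)}) +
          ∫⁻ t in Set.Ioi (1:ℝ), μ {a | t < ‖a‖ ^ (-ρ)} := lintegral_union_le _ _ _
    _ < ⊤ := by
        refine ENNReal.add_lt_top.2 ⟨?_, ?_⟩
        · calc (∫⁻ t in Set.Ioc (0:ℝ) 1, μ {a | t < ‖a‖ ^ (-ρ)})
              ≤ ∫⁻ _ in Set.Ioc (0:ℝ) 1,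
                  volume (Metric.closedBall (0 : EuclideanSpace ℝ (Fin 3)) 1) :=
              setLIntegral_mono' measurableSet_Ioc fun t ht =>
                (key t ht.1).trans (min_le_left _ _)
            _ = volume (Metric.closedBall (0 : EuclideanSpace ℝ (Fin 3)) 1) *
                  volume (Set.Ioc (0:ℝ) 1) := by rw [setLIntegral_const]
            _ < ⊤ := ENNReal.mul_lt_top measure_closedBall_lt_top (by simp)
        · calc (∫⁻ t in Set.Ioi (1:ℝ), μ {a | t < ‖a‖ ^ (-ρ)})
              ≤ ∫⁻ t in Set.Ioi (1:ℝ), ENNReal.ofReal (t ^ (-(3 / ρ))) *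
                  volume (Metric.ball (0 : EuclideanSpace ℝ (Fin 3)) 1) :=
              setLIntegral_mono' measurableSet_Ioi fun t ht =>
                (key t (lt_trans one_pos ht)).trans (min_le_right _ _)
            _ = (∫⁻ t in Set.Ioi (1:ℝ), ENNReal.ofReal (t ^ (-(3 / ρ)))) *
                  volume (Metric.ball (0 : EuclideanSpace ℝ (Fin 3)) 1) :=
              lintegral_mul_const' _ _ measure_ball_lt_top.ne
            _ < ⊤ := ENNReal.mul_lt_top
                ((integrableOn_Ioi_rpow_of_lt (by
                    rw [neg_lt, neg_neg]
                    rw [lt_div_iff₀ hρ0]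
                    linarith) one_pos).setLIntegral_lt_top)
                measure_ball_lt_top

lemma lintegral_g_lt_top {s K : ℝ} (hs : s ∈ Set.Ioo (0:ℝ) 1) (hK : 0 ≤ K) :
    ∫⁻ z : EuclideanSpace ℝ (Fin 3),
      ENNReal.ofReal ((if ‖z‖ ≤ 1 then (K * ‖z‖) ^ 2 else 4) / ‖z‖ ^ (3 + 2 * s)) < ⊤ := by
  obtain ⟨hs0, hs1⟩ := hs
  rw [← lintegral_add_compl (μ := volume)
    (f := fun z : EuclideanSpace ℝ (Fin 3) =>
      ENNReal.ofReal ((if ‖z‖ ≤ 1 then (K * ‖z‖) ^ 2 else 4) / ‖z‖ ^ (3 + 2 * s)))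
    (measurableSet_closedBall (x := (0 : EuclideanSpace ℝ (Fin 3))) (ε := 1))]
  refine ENNReal.add_lt_top.2 ⟨?_, ?_⟩
  · have hb : ∀ z ∈ Metric.closedBall (0 : EuclideanSpace ℝ (Fin 3)) 1,
        ENNReal.ofReal ((if ‖z‖ ≤ 1 then (K * ‖z‖) ^ 2 else 4) / ‖z‖ ^ (3 + 2 * s)) ≤
        ENNReal.ofReal (K ^ 2) * ENNReal.ofReal (‖z‖ ^ (-(1 + 2 * s))) := by
      intro z hz
      rw [mem_closedBall_zero_iff] at hz
      rw [if_pos hz, ← ENNReal.ofReal_mul (by positivity)]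
      apply ENNReal.ofReal_le_ofReal
      rcases eq_or_ne z 0 with rfl | hz0
      · simp
        positivity
      · have hn : 0 < ‖z‖ := norm_pos_iff.2 hz0
        rw [mul_pow, div_eq_mul_inv, ← Real.rpow_neg_one (‖z‖ ^ (3 + 2*s)),
          ← Real.rpow_mul hn.le, ← Real.rpow_natCast ‖z‖ 2]
        rw [mul_assoc, ← Real.rpow_add hn]
        apply mul_le_mul_of_nonneg_left _ (by positivity)
        apply le_of_eq
        congr 1
        push_cast
        ring
    calc (∫⁻ z in Metric.closedBall (0 : EuclideanSpace ℝ (Fin 3)) 1,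
          ENNReal.ofReal ((if ‖z‖ ≤ 1 then (K * ‖z‖) ^ 2 else 4) / ‖z‖ ^ (3 + 2 * s)))
        ≤ ∫⁻ z in Metric.closedBall (0 : EuclideanSpace ℝ (Fin 3)) 1,
            ENNReal.ofReal (K ^ 2) * ENNReal.ofReal (‖z‖ ^ (-(1 + 2 * s))) :=
          setLIntegral_mono' measurableSet_closedBall hb
      _ = ENNReal.ofReal (K ^ 2) * ∫⁻ z in Metric.closedBall (0 : EuclideanSpace ℝ (Fin 3)) 1,
            ENNReal.ofReal (‖z‖ ^ (-(1 + 2 * s))) := lintegral_const_mul' _ _ ENNReal.ofReal_ne_top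
      _ < ⊤ := ENNReal.mul_lt_top ENNReal.ofReal_lt_top
          (lintegral_ball_rpow_neg_lt_top (by linarith) (by linarith))
  · have hb : ∀ z ∈ (Metric.closedBall (0 : EuclideanSpace ℝ (Fin 3)) 1)ᶜ,
        ENNReal.ofReal ((if ‖z‖ ≤ 1 then (K * ‖z‖) ^ 2 else 4) / ‖z‖ ^ (3 + 2 * s)) ≤
        ENNReal.ofReal (4 * 2 ^ (3 + 2 * s)) * ENNReal.ofReal ((1 + ‖z‖) ^ (-(3 + 2 * s))) := by
      intro z hz
      rw [Set.mem_compl_iff, mem_closedBall_zero_iff] at hz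
      push_neg at hz
      have hn : 0 < ‖z‖ := lt_trans one_pos hz
      rw [if_neg (not_le.2 hz), ← ENNReal.ofReal_mul (by positivity)]
      apply ENNReal.ofReal_le_ofReal
      rw [Real.rpow_neg (by positivity), div_eq_mul_inv, mul_assoc]
      apply mul_le_mul_of_nonneg_left _ (by norm_num : (0:ℝ) ≤ 4)
      have h2p : (0:ℝ) < 2 ^ (3 + 2*s) := Real.rpow_pos_of_pos two_pos _
      have hcalc : (1 + ‖z‖) ^ (3 + 2*s) ≤ 2 ^ (3 + 2*s) * ‖z‖ ^ (3 + 2*s) :=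
        calc (1 + ‖z‖) ^ (3 + 2*s) ≤ (2 * ‖z‖) ^ (3 + 2*s) :=
              Real.rpow_le_rpow (by positivity) (by linarith) (by linarith)
          _ = 2 ^ (3 + 2*s) * ‖z‖ ^ (3 + 2*s) := Real.mul_rpow (by norm_num) hn.le
      calc (‖z‖ ^ (3 + 2*s))⁻¹ = 2 ^ (3 + 2*s) * (2 ^ (3 + 2*s) * ‖z‖ ^ (3 + 2*s))⁻¹ := by
            rw [mul_inv, ← mul_assoc, mul_inv_cancel₀ h2p.ne', one_mul]
        _ ≤ 2 ^ (3 + 2*s) * ((1 + ‖z‖) ^ (3 + 2*s))⁻¹ := by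
            apply mul_le_mul_of_nonneg_left _ h2p.le
            apply inv_anti₀ (by positivity) hcalc
    calc (∫⁻ z in (Metric.closedBall (0 : EuclideanSpace ℝ (Fin 3)) 1)ᶜ,
          ENNReal.ofReal ((if ‖z‖ ≤ 1 then (K * ‖z‖) ^ 2 else 4) / ‖z‖ ^ (3 + 2 * s)))
        ≤ ∫⁻ z in (Metric.closedBall (0 : EuclideanSpace ℝ (Fin 3)) 1)ᶜ,
            ENNReal.ofReal (4 * 2 ^ (3 + 2 * s)) * ENNReal.ofReal ((1 + ‖z‖) ^ (-(3 + 2 * s))) :=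
          setLIntegral_mono' measurableSet_closedBall.compl hb
      _ ≤ ∫⁻ z : EuclideanSpace ℝ (Fin 3),
            ENNReal.ofReal (4 * 2 ^ (3 + 2 * s)) * ENNReal.ofReal ((1 + ‖z‖) ^ (-(3 + 2 * s))) :=
          setLIntegral_le_lintegral _ _
      _ = ENNReal.ofReal (4 * 2 ^ (3 + 2 * s)) * ∫⁻ z : EuclideanSpace ℝ (Fin 3),
            ENNReal.ofReal ((1 + ‖z‖) ^ (-(3 + 2 * s))) :=
          lintegral_const_mul' _ _ ENNReal.ofReal_ne_top
      _ < ⊤ := ENNReal.mul_lt_top ENNReal.ofReal_lt_top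
          (finite_integral_one_add_norm (E := EuclideanSpace ℝ (Fin 3))
              (μ := volume) (r := 3 + 2 * s) (by
                rw [finrank_euclideanSpace, Fintype.card_fin]; push_cast; linarith))

-- small helpers about complex exponentials
lemma norm_exp_I_mul (r : ℝ) : ‖Complex.exp (Complex.I * r)‖ = 1 := by
  rw [mul_comm]
  exact Complex.norm_exp_ofReal_mul_I r

lemma norm_exp_I_mul_sub_one_le_two (r : ℝ) :
    ‖Complex.exp (Complex.I * r) - 1‖ ≤ 2 := by
  calc ‖Complex.exp (Complex.I * r) - 1‖ ≤ ‖Complex.exp (Complex.I * r)‖ + ‖(1:ℂ)‖ :=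
        norm_sub_le _ _
    _ = 2 := by rw [norm_exp_I_mul, norm_one]; norm_num

lemma norm_exp_I_mul_sub_one_le (r : ℝ) :
    ‖Complex.exp (Complex.I * r) - 1‖ ≤ 2 * |r| := by
  rcases le_or_gt (|r|) 1 with h | h
  · have : ‖Complex.I * r‖ ≤ 1 := by
      rwa [norm_mul, Complex.norm_I, one_mul, Complex.norm_real, Real.norm_eq_abs]
    have := Complex.norm_exp_sub_one_le (x := Complex.I * r) this
    rw [norm_mul, Complex.norm_I, one_mul, Complex.norm_real, Real.norm_eq_abs] at this
    exact this
  · exact (norm_exp_I_mul_sub_one_le_two r).trans (by nlinarith)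

lemma pointwise_bound (s α C_A R : ℝ) (hα0 : 0 < α) (hCA : 0 ≤ C_A) (hR : 0 ≤ R)
    (A : EuclideanSpace ℝ (Fin 3) → EuclideanSpace ℝ (Fin 3))
    (hA : ∀ x y, ‖A x - A y‖ ≤ C_A * ‖x - y‖ ^ α)
    (u : EuclideanSpace ℝ (Fin 3) → ℝ)
    (hsupp : ∀ y, u y ≠ 0 → ‖y‖ ≤ R)
    (x y : EuclideanSpace ℝ (Fin 3)) :
    ENNReal.ofReal
        (‖(Complex.exp (Complex.I * ((inner ℝ (A 0) x : ℝ) : ℂ)) * (u x : ℂ)) -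
            Complex.exp (Complex.I *
              ((inner ℝ (x - y) (A ((2 : ℝ)⁻¹ • (x + y))) : ℝ) : ℂ)) *
              (Complex.exp (Complex.I * ((inner ℝ (A 0) y : ℝ) : ℂ)) * (u y : ℂ))‖ ^ 2 /
          ‖x - y‖ ^ (3 + 2 * s)) ≤
      ENNReal.ofReal (2 * ((u x - u y) ^ 2 / ‖x - y‖ ^ (3 + 2 * s))) +
      ENNReal.ofReal (2 * (u y) ^ 2 *
        ((if ‖x - y‖ ≤ 1 then ((2 * C_A * (R + 1) ^ α) * ‖x - y‖) ^ 2 else 4) /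
          ‖x - y‖ ^ (3 + 2 * s))) := by
  set K : ℝ := 2 * C_A * (R + 1) ^ α with hKdef
  have hK0 : 0 ≤ K := by positivity
  set ax : ℝ := (inner ℝ (A 0) x : ℝ) with hax
  set ay : ℝ := (inner ℝ (A 0) y : ℝ) with hay
  set θ : ℝ := (inner ℝ (x - y) (A ((2 : ℝ)⁻¹ • (x + y))) : ℝ) with hθ
  set t : ℝ := ax - ay - θ with ht
  set d : ℝ := ‖x - y‖ with hd
  have hd0 : 0 ≤ d := norm_nonneg _
  have hdp0 : 0 ≤ d ^ (3 + 2 * s) := Real.rpow_nonneg hd0 _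
  -- the exponential factorization
  have hexp : Complex.exp (Complex.I * (θ : ℂ)) * Complex.exp (Complex.I * (ay : ℂ)) *
      Complex.exp (Complex.I * (t : ℂ)) = Complex.exp (Complex.I * (ax : ℂ)) := by
    rw [← Complex.exp_add, ← Complex.exp_add]
    congr 1
    rw [ht]
    push_cast
    ring
  -- the numerator bound
  set c : ℝ := if d ≤ 1 then K * d else 2 with hc
  have hc0 : 0 ≤ c := by
    rw [hc]; split
    · positivity
    · norm_num
  have hD2 : ‖Complex.exp (Complex.I * (t : ℂ)) - 1‖ ≤ 2 := norm_exp_I_mul_sub_one_le_two t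
  have hDc : |u y| * ‖Complex.exp (Complex.I * (t : ℂ)) - 1‖ ≤ |u y| * c := by
    rcases eq_or_ne (u y) 0 with h0 | h0
    · simp [h0]
    · apply mul_le_mul_of_nonneg_left _ (abs_nonneg _)
      rw [hc]
      split
      · rename_i hd1
        -- small distance : use the Hölder estimate
        have hm : ‖(2 : ℝ)⁻¹ • (x + y)‖ ≤ R + 1 := by
          have hyR : ‖y‖ ≤ R := hsupp y h0
          have : (2 : ℝ)⁻¹ • (x + y) = y + (2 : ℝ)⁻¹ • (x - y) := by module
          rw [this]
          calc ‖y + (2 : ℝ)⁻¹ • (x - y)‖ ≤ ‖y‖ + ‖(2 : ℝ)⁻¹ • (x - y)‖ := norm_add_le _ _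
            _ = ‖y‖ + 2⁻¹ * d := by
                rw [norm_smul, Real.norm_eq_abs]
                norm_num [hd]
            _ ≤ R + 2⁻¹ * 1 := by
                have : (2:ℝ)⁻¹ * d ≤ 2⁻¹ * 1 := by
                  apply mul_le_mul_of_nonneg_left hd1 (by norm_num)
                linarith
            _ ≤ R + 1 := by norm_num
        have htval : t = (inner ℝ (x - y) (A 0 - A ((2 : ℝ)⁻¹ • (x + y))) : ℝ) := by
          rw [ht, hax, hay, hθ, inner_sub_right]
          congr 1
          rw [inner_sub_left, real_inner_comm (A 0) x, real_inner_comm (A 0) y]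
        have habs : |t| ≤ C_A * (R + 1) ^ α * d := by
          rw [htval]
          calc |(inner ℝ (x - y) (A 0 - A ((2 : ℝ)⁻¹ • (x + y))) : ℝ)| ≤
                ‖x - y‖ * ‖A 0 - A ((2 : ℝ)⁻¹ • (x + y))‖ := abs_real_inner_le_norm _ _
            _ ≤ d * (C_A * ‖(0 : EuclideanSpace ℝ (Fin 3)) - (2 : ℝ)⁻¹ • (x + y)‖ ^ α) := by
                apply mul_le_mul_of_nonneg_left (hA 0 _) hd0
            _ = d * (C_A * ‖(2 : ℝ)⁻¹ • (x + y)‖ ^ α) := by rw [zero_sub, norm_neg]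
            _ ≤ d * (C_A * (R + 1) ^ α) := by
                apply mul_le_mul_of_nonneg_left _ hd0
                apply mul_le_mul_of_nonneg_left _ hCA
                exact Real.rpow_le_rpow (norm_nonneg _) hm hα0.le
            _ = C_A * (R + 1) ^ α * d := by ring
        calc ‖Complex.exp (Complex.I * (t : ℂ)) - 1‖ ≤ 2 * |t| := norm_exp_I_mul_sub_one_le t
          _ ≤ 2 * (C_A * (R + 1) ^ α * d) := by linarith
          _ = K * d := by rw [hKdef]; ring
      · exact hD2
  -- norm bound
  have hN : ‖(Complex.exp (Complex.I * (ax : ℂ)) * (u x : ℂ)) -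
      Complex.exp (Complex.I * (θ : ℂ)) * (Complex.exp (Complex.I * (ay : ℂ)) * (u y : ℂ))‖ ≤
      |u x - u y| + |u y| * c := by
    have hid : (Complex.exp (Complex.I * (ax : ℂ)) * (u x : ℂ)) -
        Complex.exp (Complex.I * (θ : ℂ)) * (Complex.exp (Complex.I * (ay : ℂ)) * (u y : ℂ)) =
        Complex.exp (Complex.I * (ax : ℂ)) * ((u x : ℂ) - (u y : ℂ)) +
          (Complex.exp (Complex.I * (θ : ℂ)) * Complex.exp (Complex.I * (ay : ℂ))) *
            ((Complex.exp (Complex.I * (t : ℂ)) - 1) * (u y : ℂ)) := by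
      rw [← hexp]; ring
    rw [hid]
    calc ‖_ + _‖ ≤ ‖Complex.exp (Complex.I * (ax : ℂ)) * ((u x : ℂ) - (u y : ℂ))‖ +
          ‖(Complex.exp (Complex.I * (θ : ℂ)) * Complex.exp (Complex.I * (ay : ℂ))) *
            ((Complex.exp (Complex.I * (t : ℂ)) - 1) * (u y : ℂ))‖ := norm_add_le _ _
      _ = |u x - u y| + ‖Complex.exp (Complex.I * (t : ℂ)) - 1‖ * |u y| := by
          rw [norm_mul, norm_mul, norm_mul, norm_mul, norm_exp_I_mul, norm_exp_I_mul,
            norm_exp_I_mul]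
          have h1 : ((u x : ℂ) - (u y : ℂ)) = ((u x - u y : ℝ) : ℂ) := by push_cast; ring
          rw [h1, Complex.norm_real, Complex.norm_real, Real.norm_eq_abs, Real.norm_eq_abs]
          ring
      _ ≤ |u x - u y| + |u y| * c := by rw [mul_comm]; linarith [hDc]
  -- squared bound
  have hsq : ‖(Complex.exp (Complex.I * (ax : ℂ)) * (u x : ℂ)) -
      Complex.exp (Complex.I * (θ : ℂ)) * (Complex.exp (Complex.I * (ay : ℂ)) * (u y : ℂ))‖ ^ 2 ≤
      2 * (u x - u y) ^ 2 + 2 * (u y) ^ 2 * c ^ 2 := by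
    have h1 : ‖(Complex.exp (Complex.I * (ax : ℂ)) * (u x : ℂ)) -
        Complex.exp (Complex.I * (θ : ℂ)) * (Complex.exp (Complex.I * (ay : ℂ)) * (u y : ℂ))‖ ^ 2 ≤
        (|u x - u y| + |u y| * c) ^ 2 := by
      apply pow_le_pow_left₀ (norm_nonneg _) hN
    calc _ ≤ (|u x - u y| + |u y| * c) ^ 2 := h1
      _ ≤ 2 * (u x - u y) ^ 2 + 2 * (u y) ^ 2 * c ^ 2 := by
        nlinarith [sq_nonneg (|u x - u y| - |u y| * c), sq_abs (u x - u y), sq_abs (u y)]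
  -- conclude
  have hcsq : c ^ 2 = if d ≤ 1 then (K * d) ^ 2 else 4 := by
    rw [hc]; split <;> norm_num
  have hdiv : ‖(Complex.exp (Complex.I * (ax : ℂ)) * (u x : ℂ)) -
      Complex.exp (Complex.I * (θ : ℂ)) * (Complex.exp (Complex.I * (ay : ℂ)) * (u y : ℂ))‖ ^ 2 /
        d ^ (3 + 2 * s) ≤
      2 * ((u x - u y) ^ 2 / d ^ (3 + 2 * s)) +
        2 * (u y) ^ 2 * ((if d ≤ 1 then (K * d) ^ 2 else 4) / d ^ (3 + 2 * s)) := by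
    have := mul_le_mul_of_nonneg_right hsq (inv_nonneg.2 hdp0)
    rw [← hcsq]
    calc _ = ‖(Complex.exp (Complex.I * (ax : ℂ)) * (u x : ℂ)) -
          Complex.exp (Complex.I * (θ : ℂ)) * (Complex.exp (Complex.I * (ay : ℂ)) * (u y : ℂ))‖ ^ 2 *
          (d ^ (3 + 2 * s))⁻¹ := by rw [div_eq_mul_inv]
      _ ≤ (2 * (u x - u y) ^ 2 + 2 * (u y) ^ 2 * c ^ 2) * (d ^ (3 + 2 * s))⁻¹ := this
      _ = 2 * ((u x - u y) ^ 2 / d ^ (3 + 2 * s)) +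
            2 * (u y) ^ 2 * (c ^ 2 / d ^ (3 + 2 * s)) := by
          rw [div_eq_mul_inv, div_eq_mul_inv]
          ring
  calc ENNReal.ofReal _ ≤ ENNReal.ofReal (2 * ((u x - u y) ^ 2 / d ^ (3 + 2 * s)) +
        2 * (u y) ^ 2 * ((if d ≤ 1 then (K * d) ^ 2 else 4) / d ^ (3 + 2 * s))) :=
      ENNReal.ofReal_le_ofReal hdiv
    _ = _ := by
      rw [ENNReal.ofReal_add (by positivity) ?_]
      have hif : 0 ≤ (if d ≤ 1 then (K * d) ^ 2 else 4) := by split <;> positivity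
      positivity

set_option maxHeartbeats 2000000 in
/-- If `A` is `α`-Hölder continuous and `u : ℝ³ → ℝ` is a compactly supported
function with finite `L²`-norm and finite Gagliardo seminorm, then
`w(x) = e^{i A(0)·x} u(x)` has finite magnetic Gagliardo seminorm. -/
theorem magnetic_seminorm_finite_of_compact_support
    (s α C_A : ℝ) (hs : s ∈ Set.Ioo (0 : ℝ) 1) (hα : α ∈ Set.Ioc (0 : ℝ) 1)
    (hCA : 0 < C_A)
    (A : EuclideanSpace ℝ (Fin 3) → EuclideanSpace ℝ (Fin 3))
    (hA : ∀ x y, ‖A x - A y‖ ≤ C_A * ‖x - y‖ ^ α)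
    (u : EuclideanSpace ℝ (Fin 3) → ℝ)
    (hu : Measurable u) (hsupp : HasCompactSupport u)
    (hL2 : (∫⁻ x, ENNReal.ofReal ((u x) ^ 2)) < ⊤)
    (hGag : (∫⁻ x, ∫⁻ y,
        ENNReal.ofReal ((u x - u y) ^ 2 / ‖x - y‖ ^ (3 + 2 * s))) < ⊤) :
    (∫⁻ x, ∫⁻ y,
        ENNReal.ofReal
          (‖(Complex.exp (Complex.I * ((inner ℝ (A 0) x : ℝ) : ℂ)) * (u x : ℂ)) -
              Complex.exp (Complex.I *
                ((inner ℝ (x - y) (A ((2 : ℝ)⁻¹ • (x + y))) : ℝ) : ℂ)) *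
                (Complex.exp (Complex.I * ((inner ℝ (A 0) y : ℝ) : ℂ)) * (u y : ℂ))‖ ^ 2 /
            ‖x - y‖ ^ (3 + 2 * s))) < ⊤ := by
  -- a radius containing the support
  obtain ⟨r, hr⟩ := hsupp.isBounded.subset_closedBall (0 : EuclideanSpace ℝ (Fin 3))
  set R : ℝ := max r 0 with hRdef
  have hR0 : 0 ≤ R := le_max_right _ _
  have hsuppR : ∀ y, u y ≠ 0 → ‖y‖ ≤ R := by
    intro y hy
    have : y ∈ tsupport u := subset_tsupport u (by simpa [Function.mem_support] using hy)
    have := hr this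
    rw [mem_closedBall_zero_iff] at this
    exact this.trans (le_max_left _ _)
  set K : ℝ := 2 * C_A * (R + 1) ^ α with hKdef
  have hK0 : 0 ≤ K := by positivity
  -- the two dominating functions
  set g : EuclideanSpace ℝ (Fin 3) → ℝ :=
    fun z => (if ‖z‖ ≤ 1 then (K * ‖z‖) ^ 2 else 4) / ‖z‖ ^ (3 + 2 * s) with hgdef
  have hgm : Measurable g := by
    apply Measurable.div
    · exact Measurable.ite (measurableSet_le measurable_norm measurable_const)
        (by measurability) measurable_const
    · measurability
  set F₁ : EuclideanSpace ℝ (Fin 3) → EuclideanSpace ℝ (Fin 3) → ℝ≥0∞ :=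
    fun x y => ENNReal.ofReal (2 * ((u x - u y) ^ 2 / ‖x - y‖ ^ (3 + 2 * s))) with hF₁def
  set F₂ : EuclideanSpace ℝ (Fin 3) → EuclideanSpace ℝ (Fin 3) → ℝ≥0∞ :=
    fun x y => ENNReal.ofReal (2 * (u y) ^ 2 * g (x - y)) with hF₂def
  have hF₁m : Measurable (Function.uncurry F₁) := by
    apply Measurable.ennreal_ofReal
    apply Measurable.mul measurable_const
    apply Measurable.div
    · exact ((hu.comp measurable_fst).sub (hu.comp measurable_snd)).pow measurable_const
    · exact (measurable_fst.sub measurable_snd).norm.pow measurable_const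
  have hF₂m : Measurable (Function.uncurry F₂) := by
    apply Measurable.ennreal_ofReal
    exact (measurable_const.mul ((hu.comp measurable_snd).pow measurable_const)).mul
      (hgm.comp (measurable_fst.sub measurable_snd))
  have hpt : ∀ x y, ENNReal.ofReal
        (‖(Complex.exp (Complex.I * ((inner ℝ (A 0) x : ℝ) : ℂ)) * (u x : ℂ)) -
            Complex.exp (Complex.I *
              ((inner ℝ (x - y) (A ((2 : ℝ)⁻¹ • (x + y))) : ℝ) : ℂ)) *
              (Complex.exp (Complex.I * ((inner ℝ (A 0) y : ℝ) : ℂ)) * (u y : ℂ))‖ ^ 2 /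
          ‖x - y‖ ^ (3 + 2 * s)) ≤ F₁ x y + F₂ x y := fun x y =>
    pointwise_bound s α C_A R hα.1 hCA.le hR0 A hA u hsuppR x y
  calc (∫⁻ x, ∫⁻ y,
        ENNReal.ofReal
          (‖(Complex.exp (Complex.I * ((inner ℝ (A 0) x : ℝ) : ℂ)) * (u x : ℂ)) -
              Complex.exp (Complex.I *
                ((inner ℝ (x - y) (A ((2 : ℝ)⁻¹ • (x + y))) : ℝ) : ℂ)) *
                (Complex.exp (Complex.I * ((inner ℝ (A 0) y : ℝ) : ℂ)) * (u y : ℂ))‖ ^ 2 /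
            ‖x - y‖ ^ (3 + 2 * s)))
      ≤ ∫⁻ x, ∫⁻ y, (F₁ x y + F₂ x y) :=
        lintegral_mono fun x => lintegral_mono fun y => hpt x y
    _ = ∫⁻ x, ((∫⁻ y, F₁ x y) + ∫⁻ y, F₂ x y) := by
        refine lintegral_congr fun x => lintegral_add_left ?_ _
        exact hF₁m.comp (measurable_prodMk_left)
    _ = (∫⁻ x, ∫⁻ y, F₁ x y) + ∫⁻ x, ∫⁻ y, F₂ x y :=
        lintegral_add_left (hF₁m.lintegral_prod_right') _
    _ < ⊤ := by
        refine ENNReal.add_lt_top.2 ⟨?_, ?_⟩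
        · -- Gagliardo part
          have : ∀ x, (∫⁻ y, F₁ x y) = ENNReal.ofReal 2 *
              ∫⁻ y, ENNReal.ofReal ((u x - u y) ^ 2 / ‖x - y‖ ^ (3 + 2 * s)) := by
            intro x
            rw [hF₁def]
            simp only
            rw [← lintegral_const_mul' _ _ ENNReal.ofReal_ne_top]
            congr 1
            funext y
            rw [← ENNReal.ofReal_mul (by norm_num)]
          calc (∫⁻ x, ∫⁻ y, F₁ x y)
              = ENNReal.ofReal 2 * ∫⁻ x, ∫⁻ y,
                  ENNReal.ofReal ((u x - u y) ^ 2 / ‖x - y‖ ^ (3 + 2 * s)) := by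
                rw [← lintegral_const_mul' _ _ ENNReal.ofReal_ne_top]
                exact lintegral_congr this
            _ < ⊤ := ENNReal.mul_lt_top ENNReal.ofReal_lt_top hGag
        · -- perturbation part
          have hswap : (∫⁻ x, ∫⁻ y, F₂ x y) = ∫⁻ y, ∫⁻ x, F₂ x y :=
            lintegral_lintegral_swap hF₂m.aemeasurable
          rw [hswap]
          set Ig : ℝ≥0∞ := ∫⁻ z, ENNReal.ofReal (g z) with hIg
          have hIglt : Ig < ⊤ := lintegral_g_lt_top hs hK0
          have hinner : ∀ y : EuclideanSpace ℝ (Fin 3),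
              (∫⁻ x, F₂ x y) = ENNReal.ofReal (2 * (u y) ^ 2) * Ig := by
            intro y
            rw [hF₂def]
            simp only
            calc (∫⁻ x, ENNReal.ofReal (2 * u y ^ 2 * g (x - y)))
                = ∫⁻ x, ENNReal.ofReal (2 * u y ^ 2) * ENNReal.ofReal (g (x - y)) := by
                  congr 1
                  funext x
                  rw [← ENNReal.ofReal_mul (by positivity)]
              _ = ENNReal.ofReal (2 * u y ^ 2) * ∫⁻ x, ENNReal.ofReal (g (x - y)) :=
                  lintegral_const_mul' _ _ ENNReal.ofReal_ne_top
              _ = ENNReal.ofReal (2 * u y ^ 2) * Ig := by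
                  rw [lintegral_sub_right_eq_self (fun z => ENNReal.ofReal (g z)) y]
          calc (∫⁻ y, ∫⁻ x, F₂ x y) = ∫⁻ y, ENNReal.ofReal (2 * (u y) ^ 2) * Ig :=
                lintegral_congr hinner
            _ = (∫⁻ y, ENNReal.ofReal (2 * (u y) ^ 2)) * Ig :=
                lintegral_mul_const' _ _ hIglt.ne
            _ = (ENNReal.ofReal 2 * ∫⁻ y, ENNReal.ofReal ((u y) ^ 2)) * Ig := by
                congr 1
                rw [← lintegral_const_mul' _ _ ENNReal.ofReal_ne_top]
                congr 1
                funext y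
                rw [← ENNReal.ofReal_mul (by norm_num)]
            _ < ⊤ := ENNReal.mul_lt_top
                (ENNReal.mul_lt_top ENNReal.ofReal_lt_top hL2) hIglt
end
end

section
/- Let s ∈ (0,1), α ∈ (0,1] and 0 < β < α/(1+α−s). Let A : ℝ³ → ℝ³ satisfy |A(x) − A(y)| ≤ C_A|x−y|^α for all x, y ∈ ℝ³ and some C_A > 0, and let w : ℝ³ → ℝ be measurable with |w(y)| ≤ C_w/(1+|y|)^{3+2s} for all y and some C_w > 0. Then lim_{ε→0⁺} ∬_{ℝ³×ℝ³} w(y)² |e^{i [A(ε(x+y)/2) − A(0)]·(x−y)} − 1|² / |x−y|^{3+2s} dx dy = 0. -/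
open MeasureTheory Filter Metric Set
open scoped ENNReal

noncomputable section

lemma finite_lintegral_rpow_neg_norm_ball
    {E : Type*} [NormedAddCommGroup E] [NormedSpace ℝ E] [FiniteDimensional ℝ E]
    [MeasurableSpace E] [BorelSpace E] (μ : Measure E) [μ.IsAddHaarMeasure]
    {a : ℝ} (ha : 0 < a) (ha' : a < Module.finrank ℝ E) :
    ∫⁻ x in ball (0 : E) 1, ENNReal.ofReal (‖x‖ ^ (-a)) ∂μ < ∞ := by
  have h_meas : Measurable fun x : E => ‖x‖ ^ (-a) := by fun_prop
  have h_nn : (0 : E → ℝ) ≤ᵐ[μ.restrict (ball 0 1)] fun x => ‖x‖ ^ (-a) :=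
    Filter.Eventually.of_forall fun x => Real.rpow_nonneg (norm_nonneg x) _
  rw [lintegral_eq_lintegral_meas_le _ h_nn h_meas.aemeasurable]
  set f := fun t : ℝ => (μ.restrict (ball (0:E) 1)) {x | t ≤ ‖x‖ ^ (-a)} with hf
  have piece1 : (∫⁻ t in Ioc 0 1, f t) < ∞ := by
    have h1 : ∀ t ∈ Ioc (0:ℝ) 1, f t ≤ μ (ball (0:E) 1) := fun t _ =>
      (measure_mono (subset_univ _)).trans_eq (Measure.restrict_apply_univ _)
    have h2 := setLIntegral_mono' (μ := volume) (f := f) (g := fun _ => μ (ball (0:E) 1))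
      measurableSet_Ioc h1
    refine lt_of_le_of_lt h2 ?_
    rw [setLIntegral_const]
    exact ENNReal.mul_lt_top measure_ball_lt_top (by simp)
  have piece2 : (∫⁻ t in Ioi 1, f t) < ∞ := by
    have hbnd : ∀ t ∈ Ioi (1:ℝ), f t ≤
        ENNReal.ofReal ((t ^ (-a)⁻¹) ^ Module.finrank ℝ E) * μ (ball (0:E) 1) := by
      intro t ht
      have ht0 : (0:ℝ) < t := lt_trans one_pos ht
      have hsub : {x : E | t ≤ ‖x‖ ^ (-a)} ⊆ closedBall 0 (t ^ (-a)⁻¹) := by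
        intro x hx
        simp only [mem_setOf_eq] at hx
        have hx0 : 0 < ‖x‖ := by
          rcases (norm_nonneg x).eq_or_lt with h | h
          · exfalso
            rw [← h, Real.zero_rpow (neg_ne_zero.mpr ha.ne')] at hx
            exact absurd (lt_of_lt_of_le ht0 hx) (lt_irrefl 0)
          · exact h
        rw [mem_closedBall_zero_iff]
        exact (Real.le_rpow_inv_iff_of_neg hx0 ht0 (neg_neg_of_pos ha)).mpr hx
      have step : f t ≤ μ (closedBall (0:E) (t ^ (-a)⁻¹)) :=
        le_trans (Measure.restrict_apply_le _ _) (measure_mono hsub)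
      rwa [μ.addHaar_closedBall _ (Real.rpow_nonneg ht0.le _)] at step
    have h2 := setLIntegral_mono' (μ := volume) (f := f)
      (g := fun t => ENNReal.ofReal ((t ^ (-a)⁻¹) ^ Module.finrank ℝ E) *
        μ (ball (0:E) 1)) measurableSet_Ioi hbnd
    refine lt_of_le_of_lt h2 ?_
    rw [lintegral_mul_const' _ _ measure_ball_lt_top.ne]
    refine ENNReal.mul_lt_top ?_ measure_ball_lt_top
    have hcongr : ∀ t ∈ Ioi (1:ℝ),
        ENNReal.ofReal ((t ^ (-a)⁻¹) ^ Module.finrank ℝ E) =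
        ENNReal.ofReal (t ^ ((-a)⁻¹ * Module.finrank ℝ E)) := by
      intro t ht
      rw [← Real.rpow_natCast (t ^ (-a)⁻¹) _, ← Real.rpow_mul (le_of_lt (lt_trans one_pos ht))]
    rw [setLIntegral_congr_fun measurableSet_Ioi hcongr]
    refine IntegrableOn.setLIntegral_lt_top ?_
    refine integrableOn_Ioi_rpow_of_lt ?_ one_pos
    rw [inv_mul_eq_div, div_lt_iff_of_neg (by linarith : -a < 0)]
    · push_cast; linarith
  calc
    ∫⁻ t in Ioi 0, f t ≤ ∫⁻ t in Ioc 0 1 ∪ Ioi 1, f t :=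
      lintegral_mono_set Ioi_subset_Ioc_union_Ioi
    _ ≤ (∫⁻ t in Ioc 0 1, f t) + ∫⁻ t in Ioi 1, f t := lintegral_union_le _ _ _
    _ < ∞ := ENNReal.add_lt_top.2 ⟨piece1, piece2⟩
/-- Finiteness of the integral of the dominating kernel
`min 1 (K * ((1+‖z‖)*‖z‖)^2) / ‖z‖^(3+2s)` over `ℝ³`. -/
lemma finite_lintegral_kernel (K s : ℝ) (hK : 0 ≤ K) (hs0 : 0 < s) (hs1 : s < 1) :
    ∫⁻ z : EuclideanSpace ℝ (Fin 3),
      ENNReal.ofReal (min 1 (K * ((1 + ‖z‖) * ‖z‖) ^ 2) / ‖z‖ ^ (3 + 2 * s)) < ∞ := by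
  have hfr : (Module.finrank ℝ (EuclideanSpace ℝ (Fin 3)) : ℝ) = 3 := by
    rw [finrank_euclideanSpace_fin]; norm_num
  rw [← lintegral_add_compl _ (measurableSet_ball (x := (0 : EuclideanSpace ℝ (Fin 3))) (ε := 1))]
  have piece1 : ∫⁻ z in ball (0 : EuclideanSpace ℝ (Fin 3)) 1,
      ENNReal.ofReal (min 1 (K * ((1 + ‖z‖) * ‖z‖) ^ 2) / ‖z‖ ^ (3 + 2 * s)) < ∞ := by
    have hbnd : ∀ z ∈ ball (0 : EuclideanSpace ℝ (Fin 3)) 1,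
        ENNReal.ofReal (min 1 (K * ((1 + ‖z‖) * ‖z‖) ^ 2) / ‖z‖ ^ (3 + 2 * s)) ≤
        ENNReal.ofReal (4 * K) * ENNReal.ofReal (‖z‖ ^ (-(1 + 2 * s))) := by
      intro z hz
      rw [← ENNReal.ofReal_mul (by positivity)]
      refine ENNReal.ofReal_le_ofReal ?_
      rcases (norm_nonneg z).eq_or_lt with h0 | h0
      · rw [← h0]
        rw [Real.zero_rpow (by positivity : (3 + 2*s) ≠ 0),
          Real.zero_rpow (neg_ne_zero.mpr (by positivity : (1 + 2*s) ≠ 0))]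
        simp
      · have hz1 : ‖z‖ < 1 := by simpa using hz
        have hnum : min 1 (K * ((1 + ‖z‖) * ‖z‖) ^ 2) ≤ 4 * K * ‖z‖ ^ (2:ℕ) := by
          refine le_trans (min_le_right _ _) ?_
          have h4 : (1 + ‖z‖) ^ 2 ≤ 4 := by nlinarith
          have : ((1 + ‖z‖) * ‖z‖) ^ 2 ≤ 4 * ‖z‖ ^ 2 := by
            rw [mul_pow]; nlinarith [sq_nonneg ‖z‖]
          nlinarith
        have hpow : ‖z‖ ^ (2:ℕ) / ‖z‖ ^ (3 + 2 * s) = ‖z‖ ^ (-(1 + 2*s)) := by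
          rw [← Real.rpow_natCast ‖z‖ 2, ← Real.rpow_sub h0]
          ring_nf
        calc min 1 (K * ((1 + ‖z‖) * ‖z‖) ^ 2) / ‖z‖ ^ (3 + 2 * s)
            ≤ 4 * K * ‖z‖ ^ (2:ℕ) / ‖z‖ ^ (3 + 2 * s) := by
              exact div_le_div_of_nonneg_right hnum (by positivity) -- check
          _ = 4 * K * (‖z‖ ^ (2:ℕ) / ‖z‖ ^ (3 + 2 * s)) := by ring
          _ = 4 * K * ‖z‖ ^ (-(1 + 2*s)) := by rw [hpow]
    refine lt_of_le_of_lt (setLIntegral_mono' measurableSet_ball hbnd) ?_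
    rw [lintegral_const_mul' _ _ ENNReal.ofReal_ne_top]
    refine ENNReal.mul_lt_top ENNReal.ofReal_lt_top ?_
    refine finite_lintegral_rpow_neg_norm_ball volume (by linarith) ?_
    rw [hfr]; linarith
  have piece2 : ∫⁻ z in (ball (0 : EuclideanSpace ℝ (Fin 3)) 1)ᶜ,
      ENNReal.ofReal (min 1 (K * ((1 + ‖z‖) * ‖z‖) ^ 2) / ‖z‖ ^ (3 + 2 * s)) < ∞ := by
    have hbnd : ∀ z ∈ (ball (0 : EuclideanSpace ℝ (Fin 3)) 1)ᶜ,
        ENNReal.ofReal (min 1 (K * ((1 + ‖z‖) * ‖z‖) ^ 2) / ‖z‖ ^ (3 + 2 * s)) ≤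
        ENNReal.ofReal ((2:ℝ) ^ (3 + 2*s)) * ENNReal.ofReal ((1 + ‖z‖) ^ (-(3 + 2*s))) := by
      intro z hz
      have hz1 : 1 ≤ ‖z‖ := by simpa using hz
      have hz0 : 0 < ‖z‖ := lt_of_lt_of_le one_pos hz1
      rw [← ENNReal.ofReal_mul (by positivity)]
      refine ENNReal.ofReal_le_ofReal ?_
      have h2z : (1 + ‖z‖) ^ (3 + 2*s) ≤ (2:ℝ) ^ (3 + 2*s) * ‖z‖ ^ (3 + 2*s) := by
        rw [← Real.mul_rpow (by norm_num) (norm_nonneg z)]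
        exact Real.rpow_le_rpow (by positivity) (by linarith) (by linarith)
      calc min 1 (K * ((1 + ‖z‖) * ‖z‖) ^ 2) / ‖z‖ ^ (3 + 2 * s)
          ≤ 1 / ‖z‖ ^ (3 + 2 * s) := by
            exact div_le_div_of_nonneg_right (min_le_left _ _) (by positivity)
        _ ≤ (2:ℝ) ^ (3 + 2*s) * (1 + ‖z‖) ^ (-(3 + 2*s)) := by
            have hP : (0:ℝ) < ‖z‖ ^ (3 + 2*s) := by positivity
            have hQ : (0:ℝ) < (1 + ‖z‖) ^ (3 + 2*s) := by positivity
            have heq : (2:ℝ) ^ (3 + 2*s) * (1 + ‖z‖) ^ (-(3 + 2*s)) =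
                (2:ℝ) ^ (3 + 2*s) / (1 + ‖z‖) ^ (3 + 2*s) := by
              rw [Real.rpow_neg (by positivity), div_eq_mul_inv]
            rw [heq, div_le_div_iff₀ hP hQ, one_mul]
            exact h2z
    refine lt_of_le_of_lt (setLIntegral_mono' (measurableSet_ball).compl hbnd) ?_
    rw [lintegral_const_mul' _ _ ENNReal.ofReal_ne_top]
    refine ENNReal.mul_lt_top ENNReal.ofReal_lt_top ?_
    refine lt_of_le_of_lt (lintegral_mono_set (subset_univ _)) ?_
    simp only [Measure.restrict_univ]
    refine finite_integral_one_add_norm ?_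
    rw [hfr]; linarith
  exact ENNReal.add_lt_top.2 ⟨piece1, piece2⟩

lemma norm_exp_I_mul_sub_one_sq_le (θ : ℝ) :
    ‖Complex.exp (Complex.I * (θ : ℂ)) - 1‖ ^ 2 ≤ 4 * min 1 (θ ^ 2) := by
  rcases le_or_gt |θ| 1 with h | h
  · have h1 : ‖Complex.I * (θ : ℂ)‖ = |θ| := by
      rw [norm_mul, Complex.norm_I, one_mul, Complex.norm_real, Real.norm_eq_abs]
    have h2 := Complex.norm_exp_sub_one_le (x := Complex.I * (θ : ℂ)) (by rw [h1]; exact h)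
    rw [h1] at h2
    have h3 : ‖Complex.exp (Complex.I * (θ : ℂ)) - 1‖ ≤ 2 * |θ| := h2
    have hmin : min 1 (θ ^ 2) = θ ^ 2 := min_eq_right (by nlinarith [sq_abs θ, abs_nonneg θ])
    rw [hmin]
    calc ‖Complex.exp (Complex.I * (θ : ℂ)) - 1‖ ^ 2 ≤ (2 * |θ|) ^ 2 :=
          pow_le_pow_left₀ (norm_nonneg _) h3 2
      _ = 4 * θ ^ 2 := by rw [mul_pow, sq_abs]; ring
  · have hnorm1 : ‖Complex.exp (Complex.I * (θ : ℂ))‖ = 1 := by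
      rw [Complex.norm_exp]
      simp
    have h3 : ‖Complex.exp (Complex.I * (θ : ℂ)) - 1‖ ≤ 2 := by
      calc ‖Complex.exp (Complex.I * (θ : ℂ)) - 1‖ ≤
          ‖Complex.exp (Complex.I * (θ : ℂ))‖ + ‖(1 : ℂ)‖ := norm_sub_le _ _
        _ = 2 := by rw [hnorm1, norm_one]; norm_num
    have hmin : min 1 (θ ^ 2) = 1 := min_eq_left (by nlinarith [sq_abs θ])
    rw [hmin]
    nlinarith [norm_nonneg (Complex.exp (Complex.I * (θ : ℂ)) - 1)]

lemma min_one_mul_le {a b : ℝ} (ha : 1 ≤ a) (hb : 0 ≤ b) : min 1 (a * b) ≤ a * min 1 b := by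
  rcases le_total b 1 with h | h
  · rw [min_eq_right h]
    calc min 1 (a * b) ≤ a * b := min_le_right _ _
      _ = a * b := rfl
  · rw [min_eq_left h, mul_one]
    exact le_trans (min_le_left _ _) ha

section helpers

variable {s α C_A : ℝ}
variable (A : EuclideanSpace ℝ (Fin 3) → EuclideanSpace ℝ (Fin 3))
variable (w : EuclideanSpace ℝ (Fin 3) → ℝ)

lemma theta_abs_le (hα0 : 0 < α) (hα1 : α ≤ 1) (hCA : 0 < C_A)
    (hA : ∀ x y, ‖A x - A y‖ ≤ C_A * ‖x - y‖ ^ α)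
    {ε : ℝ} (hε0 : 0 < ε) (hε1 : ε ≤ 1) (x y : EuclideanSpace ℝ (Fin 3)) :
    |(inner ℝ (A ((ε / 2) • (x + y)) - A 0) (x - y) : ℝ)| ≤
      C_A * ((1 + ‖y‖) * ((1 + ‖x - y‖) * ‖x - y‖)) := by
  set r := ‖x - y‖ with hrdef
  have hr0 : 0 ≤ r := norm_nonneg _
  have hu : ‖(ε / 2) • (x + y)‖ ≤ (1 + ‖y‖) * (1 + r) := by
    have h2 : ‖(ε / 2) • (x + y)‖ = (ε / 2) * ‖x + y‖ := by
      rw [norm_smul, Real.norm_eq_abs, abs_of_nonneg (by linarith)]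
    have h3 : ‖x + y‖ ≤ r + 2 * ‖y‖ := by
      have heq : x + y = (x - y) + (2:ℝ) • y := by rw [two_smul]; abel
      rw [heq]
      refine le_trans (norm_add_le _ _) ?_
      rw [norm_smul, Real.norm_eq_abs]
      simp [abs_of_nonneg, hrdef]
    rw [h2]
    nlinarith [norm_nonneg (x + y), norm_nonneg y]
  have hu' : ‖(ε / 2) • (x + y)‖ ^ α ≤ (1 + ‖y‖) * (1 + r) := by
    calc ‖(ε / 2) • (x + y)‖ ^ α ≤ ((1 + ‖y‖) * (1 + r)) ^ α :=
          Real.rpow_le_rpow (norm_nonneg _) hu hα0.le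
      _ ≤ ((1 + ‖y‖) * (1 + r)) ^ (1:ℝ) :=
          Real.rpow_le_rpow_of_exponent_le (by nlinarith [norm_nonneg y]) hα1
      _ = (1 + ‖y‖) * (1 + r) := Real.rpow_one _
  calc |(inner ℝ (A ((ε / 2) • (x + y)) - A 0) (x - y) : ℝ)| ≤
      ‖A ((ε / 2) • (x + y)) - A 0‖ * r := abs_real_inner_le_norm _ _
    _ ≤ (C_A * ‖(ε / 2) • (x + y) - 0‖ ^ α) * r :=
      mul_le_mul_of_nonneg_right (hA _ 0) hr0
    _ = C_A * ‖(ε / 2) • (x + y)‖ ^ α * r := by rw [sub_zero]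
    _ ≤ C_A * ((1 + ‖y‖) * (1 + r)) * r :=
      mul_le_mul_of_nonneg_right (mul_le_mul_of_nonneg_left hu' hCA.le) hr0
    _ = C_A * ((1 + ‖y‖) * ((1 + r) * r)) := by ring

end helpers

section helpers2



lemma dom_ineq {s α C_A : ℝ} (hs0 : 0 < s)
    (hα0 : 0 < α) (hα1 : α ≤ 1) (hCA : 0 < C_A)
    (A : EuclideanSpace ℝ (Fin 3) → EuclideanSpace ℝ (Fin 3))
    (hA : ∀ x y, ‖A x - A y‖ ≤ C_A * ‖x - y‖ ^ α)
    (w : EuclideanSpace ℝ (Fin 3) → ℝ)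
    {ε : ℝ} (hε0 : 0 < ε) (hε1 : ε ≤ 1) (x y : EuclideanSpace ℝ (Fin 3)) :
    ENNReal.ofReal ((w y) ^ 2 *
        ‖Complex.exp (Complex.I *
            ((inner ℝ (A ((ε / 2) • (x + y)) - A 0) (x - y) : ℝ) : ℂ)) - 1‖ ^ 2 /
        ‖x - y‖ ^ (3 + 2 * s)) ≤
    ENNReal.ofReal ((4 * w y ^ 2 * (1 + ‖y‖) ^ 2) *
        (min 1 (C_A ^ 2 * ((1 + ‖x - y‖) * ‖x - y‖) ^ 2) / ‖x - y‖ ^ (3 + 2 * s))) := by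
  refine ENNReal.ofReal_le_ofReal ?_
  set r := ‖x - y‖ with hrdef
  set θ := (inner ℝ (A ((ε / 2) • (x + y)) - A 0) (x - y) : ℝ) with hθdef
  have hr0 : 0 ≤ r := norm_nonneg _
  have hθle : |θ| ≤ C_A * ((1 + ‖y‖) * ((1 + r) * r)) :=
    theta_abs_le A hα0 hα1 hCA hA hε0 hε1 x y
  have hkey : ‖Complex.exp (Complex.I * (θ : ℂ)) - 1‖ ^ 2 ≤
      4 * (1 + ‖y‖) ^ 2 * min 1 (C_A ^ 2 * ((1 + r) * r) ^ 2) := by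
    have h1 := norm_exp_I_mul_sub_one_sq_le θ
    have hθsq : θ ^ 2 ≤ (1 + ‖y‖) ^ 2 * (C_A ^ 2 * ((1 + r) * r) ^ 2) := by
      have h5 : θ ^ 2 ≤ (C_A * ((1 + ‖y‖) * ((1 + r) * r))) ^ 2 := by
        rw [← sq_abs θ]
        exact pow_le_pow_left₀ (abs_nonneg θ) hθle 2
      calc θ ^ 2 ≤ (C_A * ((1 + ‖y‖) * ((1 + r) * r))) ^ 2 := h5
        _ = (1 + ‖y‖) ^ 2 * (C_A ^ 2 * ((1 + r) * r) ^ 2) := by ring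
    have h6 : min 1 (θ ^ 2) ≤ (1 + ‖y‖) ^ 2 * min 1 (C_A ^ 2 * ((1 + r) * r) ^ 2) := by
      refine le_trans (min_le_min le_rfl hθsq) ?_
      exact min_one_mul_le (by nlinarith [norm_nonneg y]) (by positivity)
    calc ‖Complex.exp (Complex.I * (θ : ℂ)) - 1‖ ^ 2 ≤ 4 * min 1 (θ ^ 2) := h1
      _ ≤ 4 * ((1 + ‖y‖) ^ 2 * min 1 (C_A ^ 2 * ((1 + r) * r) ^ 2)) := by linarith
      _ = 4 * (1 + ‖y‖) ^ 2 * min 1 (C_A ^ 2 * ((1 + r) * r) ^ 2) := by ring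
  rcases hr0.eq_or_lt with h0 | h0
  · rw [← h0, Real.zero_rpow (by positivity : (3 + 2 * s) ≠ 0), div_zero, div_zero]
    simp
  · have hden : (0:ℝ) < r ^ (3 + 2 * s) := Real.rpow_pos_of_pos h0 _
    rw [← mul_div_assoc]
    refine div_le_div_of_nonneg_right ?_ hden.le
    calc w y ^ 2 * ‖Complex.exp (Complex.I * (θ : ℂ)) - 1‖ ^ 2 ≤
        w y ^ 2 * (4 * (1 + ‖y‖) ^ 2 * min 1 (C_A ^ 2 * ((1 + r) * r) ^ 2)) :=
          mul_le_mul_of_nonneg_left hkey (sq_nonneg _)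
      _ = 4 * w y ^ 2 * (1 + ‖y‖) ^ 2 * min 1 (C_A ^ 2 * ((1 + r) * r) ^ 2) := by ring

end helpers2

section helpers3

lemma F_measurable {s α C_A : ℝ} (hs0 : 0 < s)
    (A : EuclideanSpace ℝ (Fin 3) → EuclideanSpace ℝ (Fin 3)) (hAc : Continuous A)
    (w : EuclideanSpace ℝ (Fin 3) → ℝ) (hw : Measurable w) (ε : ℝ) :
    Measurable (fun p : EuclideanSpace ℝ (Fin 3) × EuclideanSpace ℝ (Fin 3) =>
      ENNReal.ofReal ((w p.2) ^ 2 *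
        ‖Complex.exp (Complex.I *
            ((inner ℝ (A ((ε / 2) • (p.1 + p.2)) - A 0) (p.1 - p.2) : ℝ) : ℂ)) - 1‖ ^ 2 /
        ‖p.1 - p.2‖ ^ (3 + 2 * s))) := by
  apply ENNReal.measurable_ofReal.comp
  apply Measurable.div
  · refine Measurable.mul ?_ ?_
    · exact (hw.comp measurable_snd).pow_const 2
    · have hcont : Continuous fun p : EuclideanSpace ℝ (Fin 3) × EuclideanSpace ℝ (Fin 3) =>
          ‖Complex.exp (Complex.I *
            ((inner ℝ (A ((ε / 2) • (p.1 + p.2)) - A 0) (p.1 - p.2) : ℝ) : ℂ)) - 1‖ ^ 2 := by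
        apply Continuous.pow
        apply Continuous.norm
        refine Continuous.sub ?_ continuous_const
        refine Complex.continuous_exp.comp ?_
        refine Continuous.mul continuous_const ?_
        refine Complex.continuous_ofReal.comp ?_
        exact Continuous.inner
          ((hAc.comp (by fun_prop : Continuous fun p : EuclideanSpace ℝ (Fin 3) ×
              EuclideanSpace ℝ (Fin 3) => (ε / 2) • (p.1 + p.2)) :
              Continuous fun p : EuclideanSpace ℝ (Fin 3) × EuclideanSpace ℝ (Fin 3) =>
                A ((ε / 2) • (p.1 + p.2))).sub
            continuous_const)
          (continuous_fst.sub continuous_snd)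
      exact hcont.measurable
  · exact ((continuous_fst.sub continuous_snd).norm.rpow_const
      (fun p => Or.inr (by positivity))).measurable

lemma F_tendsto {s α C_A : ℝ} (hα0 : 0 < α)
    (A : EuclideanSpace ℝ (Fin 3) → EuclideanSpace ℝ (Fin 3))
    (hA : ∀ x y, ‖A x - A y‖ ≤ C_A * ‖x - y‖ ^ α)
    (w : EuclideanSpace ℝ (Fin 3) → ℝ) (x y : EuclideanSpace ℝ (Fin 3)) :
    Tendsto (fun ε : ℝ =>
      ENNReal.ofReal ((w y) ^ 2 *
        ‖Complex.exp (Complex.I *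
            ((inner ℝ (A ((ε / 2) • (x + y)) - A 0) (x - y) : ℝ) : ℂ)) - 1‖ ^ 2 /
        ‖x - y‖ ^ (3 + 2 * s)))
      (nhdsWithin 0 (Set.Ioi 0)) (nhds 0) := by
  by_cases hxy : x = y
  · have hz : ∀ ε : ℝ,
        ENNReal.ofReal ((w y) ^ 2 *
          ‖Complex.exp (Complex.I *
              ((inner ℝ (A ((ε / 2) • (x + y)) - A 0) (x - y) : ℝ) : ℂ)) - 1‖ ^ 2 /
          ‖x - y‖ ^ (3 + 2 * s)) = 0 := by
      intro ε
      rw [hxy, sub_self]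
      simp
    simp only [hz]
    exact tendsto_const_nhds
  · set g : ℝ → ℝ≥0∞ := fun t =>
      ENNReal.ofReal ((w y) ^ 2 * ‖Complex.exp (Complex.I * (t : ℂ)) - 1‖ ^ 2 /
        ‖x - y‖ ^ (3 + 2 * s)) with hgdef
    have hgc : Continuous g := by
      apply ENNReal.continuous_ofReal.comp
      apply Continuous.div_const
      refine Continuous.mul continuous_const ?_
      apply Continuous.pow
      apply Continuous.norm
      refine Continuous.sub ?_ continuous_const
      exact Complex.continuous_exp.comp (continuous_const.mul Complex.continuous_ofReal)
    have hg0 : g 0 = 0 := by simp [hgdef]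
    have hθ : Tendsto (fun ε : ℝ => (inner ℝ (A ((ε / 2) • (x + y)) - A 0) (x - y) : ℝ))
        (nhdsWithin 0 (Set.Ioi 0)) (nhds 0) := by
      have hbnd : ∀ ε : ℝ, ‖(inner ℝ (A ((ε / 2) • (x + y)) - A 0) (x - y) : ℝ)‖ ≤
          (C_A * ‖x - y‖) * ‖(ε / 2) • (x + y)‖ ^ α := by
        intro ε
        rw [Real.norm_eq_abs]
        calc |(inner ℝ (A ((ε / 2) • (x + y)) - A 0) (x - y) : ℝ)| ≤
            ‖A ((ε / 2) • (x + y)) - A 0‖ * ‖x - y‖ := abs_real_inner_le_norm _ _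
          _ ≤ (C_A * ‖(ε / 2) • (x + y) - 0‖ ^ α) * ‖x - y‖ :=
            mul_le_mul_of_nonneg_right (hA _ 0) (norm_nonneg _)
          _ = (C_A * ‖x - y‖) * ‖(ε / 2) • (x + y)‖ ^ α := by rw [sub_zero]; ring
      refine squeeze_zero_norm hbnd ?_
      have h1 : Tendsto (fun ε : ℝ => ‖(ε / 2) • (x + y)‖) (nhds 0) (nhds 0) := by
        have hc : Continuous fun ε : ℝ => ‖(ε / 2) • (x + y)‖ :=
          ((continuous_id.div_const 2).smul continuous_const).norm
        have h0 : ‖((0:ℝ) / 2) • (x + y)‖ = 0 := by simp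
        simpa [h0] using hc.tendsto 0
      have h2 := h1.rpow_const (Or.inr hα0.le)
      rw [Real.zero_rpow hα0.ne'] at h2
      have h3 := h2.const_mul (C_A * ‖x - y‖)
      rw [mul_zero] at h3
      exact h3.mono_left nhdsWithin_le_nhds
    have hcomp := (hgc.tendsto 0).comp hθ
    rw [hg0] at hcomp
    exact hcomp

end helpers3

section helpers4


lemma bound_measurable {s C_A : ℝ} (hs0 : 0 < s)
    (w : EuclideanSpace ℝ (Fin 3) → ℝ) (hw : Measurable w) :
    Measurable (fun p : EuclideanSpace ℝ (Fin 3) × EuclideanSpace ℝ (Fin 3) =>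
      ENNReal.ofReal ((4 * w p.2 ^ 2 * (1 + ‖p.2‖) ^ 2) *
        (min 1 (C_A ^ 2 * ((1 + ‖p.1 - p.2‖) * ‖p.1 - p.2‖) ^ 2) /
          ‖p.1 - p.2‖ ^ (3 + 2 * s)))) := by
  apply ENNReal.measurable_ofReal.comp
  refine Measurable.mul ?_ ?_
  · refine Measurable.mul ?_ ?_
    · exact measurable_const.mul ((hw.comp measurable_snd).pow_const 2)
    · exact ((continuous_const.add continuous_snd.norm).pow 2).measurable
  · refine Measurable.div ?_ ?_
    · exact (continuous_const.min (continuous_const.mul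
        (((continuous_const.add (continuous_fst.sub continuous_snd).norm).mul
          (continuous_fst.sub continuous_snd).norm).pow 2))).measurable
    · exact ((continuous_fst.sub continuous_snd).norm.rpow_const
        (fun p => Or.inr (by positivity))).measurable

lemma weight_finite {s C_w : ℝ} (hs0 : 0 < s) (hs1 : s < 1) (hCw : 0 < C_w)
    (w : EuclideanSpace ℝ (Fin 3) → ℝ)
    (hdecay : ∀ y, |w y| ≤ C_w / (1 + ‖y‖) ^ (3 + 2 * s)) :
    ∫⁻ y : EuclideanSpace ℝ (Fin 3),
      ENNReal.ofReal (4 * w y ^ 2 * (1 + ‖y‖) ^ 2) < ∞ := by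
  have hfr3 : (Module.finrank ℝ (EuclideanSpace ℝ (Fin 3)) : ℝ) = 3 := by
    rw [finrank_euclideanSpace_fin]; norm_num
  have hwb : ∀ y : EuclideanSpace ℝ (Fin 3), 4 * w y ^ 2 * (1 + ‖y‖) ^ 2 ≤
      (4 * C_w ^ 2) * (1 + ‖y‖) ^ (-(4 + 4 * s)) := by
    intro y
    have h1 : |w y| ≤ C_w * (1 + ‖y‖) ^ (-(3 + 2 * s)) := by
      rw [Real.rpow_neg (by positivity), ← div_eq_mul_inv]
      exact hdecay y
    have h2 : w y ^ 2 ≤ C_w ^ 2 * ((1 + ‖y‖) ^ (-(3 + 2 * s))) ^ 2 := by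
      rw [← sq_abs]
      calc |w y| ^ 2 ≤ (C_w * (1 + ‖y‖) ^ (-(3 + 2 * s))) ^ 2 :=
            pow_le_pow_left₀ (abs_nonneg _) h1 2
        _ = C_w ^ 2 * ((1 + ‖y‖) ^ (-(3 + 2 * s))) ^ 2 := by ring
    have h3 : ((1 + ‖y‖) ^ (-(3 + 2 * s))) ^ 2 * (1 + ‖y‖) ^ 2 =
        (1 + ‖y‖) ^ (-(4 + 4 * s)) := by
      rw [← Real.rpow_natCast ((1 + ‖y‖) ^ (-(3 + 2 * s))) 2,
        ← Real.rpow_natCast (1 + ‖y‖) 2,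
        ← Real.rpow_mul (by positivity), ← Real.rpow_add (by positivity)]
      norm_num
      ring_nf
    calc 4 * w y ^ 2 * (1 + ‖y‖) ^ 2 ≤
        4 * (C_w ^ 2 * ((1 + ‖y‖) ^ (-(3 + 2 * s))) ^ 2) * (1 + ‖y‖) ^ 2 := by
          have hp : (0:ℝ) ≤ (1 + ‖y‖) ^ 2 := by positivity
          nlinarith [h2, hp]
      _ = (4 * C_w ^ 2) * (((1 + ‖y‖) ^ (-(3 + 2 * s))) ^ 2 * (1 + ‖y‖) ^ 2) := by ring
      _ = (4 * C_w ^ 2) * (1 + ‖y‖) ^ (-(4 + 4 * s)) := by rw [h3]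
  calc ∫⁻ y : EuclideanSpace ℝ (Fin 3), ENNReal.ofReal (4 * w y ^ 2 * (1 + ‖y‖) ^ 2)
      ≤ ∫⁻ y : EuclideanSpace ℝ (Fin 3),
        ENNReal.ofReal ((4 * C_w ^ 2) * (1 + ‖y‖) ^ (-(4 + 4 * s))) :=
        lintegral_mono fun y => ENNReal.ofReal_le_ofReal (hwb y)
    _ = ENNReal.ofReal (4 * C_w ^ 2) *
        ∫⁻ y : EuclideanSpace ℝ (Fin 3), ENNReal.ofReal ((1 + ‖y‖) ^ (-(4 + 4 * s))) := by
        simp_rw [ENNReal.ofReal_mul (by positivity : (0:ℝ) ≤ 4 * C_w ^ 2)]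
        rw [lintegral_const_mul' _ _ ENNReal.ofReal_ne_top]
    _ < ∞ := ENNReal.mul_lt_top ENNReal.ofReal_lt_top
        (finite_integral_one_add_norm (by rw [hfr3]; linarith))

lemma bound_finite {s C_A C_w : ℝ} (hs0 : 0 < s) (hs1 : s < 1) (hCA : 0 < C_A) (hCw : 0 < C_w)
    (w : EuclideanSpace ℝ (Fin 3) → ℝ) (hw : Measurable w)
    (hdecay : ∀ y, |w y| ≤ C_w / (1 + ‖y‖) ^ (3 + 2 * s)) :
    ∫⁻ p : EuclideanSpace ℝ (Fin 3) × EuclideanSpace ℝ (Fin 3),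
      ENNReal.ofReal ((4 * w p.2 ^ 2 * (1 + ‖p.2‖) ^ 2) *
        (min 1 (C_A ^ 2 * ((1 + ‖p.1 - p.2‖) * ‖p.1 - p.2‖) ^ 2) /
          ‖p.1 - p.2‖ ^ (3 + 2 * s)))
      ∂((volume : Measure (EuclideanSpace ℝ (Fin 3))).prod volume) ≠ ∞ := by
  have hIψ : ∫⁻ z : EuclideanSpace ℝ (Fin 3),
      ENNReal.ofReal (min 1 (C_A ^ 2 * ((1 + ‖z‖) * ‖z‖) ^ 2) / ‖z‖ ^ (3 + 2 * s)) < ∞ :=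
    finite_lintegral_kernel _ s (by positivity) hs0 hs1
  rw [lintegral_prod_symm _ (bound_measurable (C_A := C_A) hs0 w hw).aemeasurable]
  have hinner : ∀ y : EuclideanSpace ℝ (Fin 3),
      (∫⁻ x : EuclideanSpace ℝ (Fin 3), ENNReal.ofReal ((4 * w y ^ 2 * (1 + ‖y‖) ^ 2) *
        (min 1 (C_A ^ 2 * ((1 + ‖x - y‖) * ‖x - y‖) ^ 2) / ‖x - y‖ ^ (3 + 2 * s)))) =
      ENNReal.ofReal (4 * w y ^ 2 * (1 + ‖y‖) ^ 2) *
        ∫⁻ z : EuclideanSpace ℝ (Fin 3), ENNReal.ofReal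
          (min 1 (C_A ^ 2 * ((1 + ‖z‖) * ‖z‖) ^ 2) / ‖z‖ ^ (3 + 2 * s)) := by
    intro y
    have hsplit : ∀ x : EuclideanSpace ℝ (Fin 3),
        ENNReal.ofReal ((4 * w y ^ 2 * (1 + ‖y‖) ^ 2) *
          (min 1 (C_A ^ 2 * ((1 + ‖x - y‖) * ‖x - y‖) ^ 2) / ‖x - y‖ ^ (3 + 2 * s))) =
        ENNReal.ofReal (4 * w y ^ 2 * (1 + ‖y‖) ^ 2) *
          ENNReal.ofReal (min 1 (C_A ^ 2 * ((1 + ‖x - y‖) * ‖x - y‖) ^ 2) /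
            ‖x - y‖ ^ (3 + 2 * s)) := fun x => ENNReal.ofReal_mul (by positivity)
    simp_rw [hsplit]
    rw [lintegral_const_mul' _ _ ENNReal.ofReal_ne_top]
    congr 1
    exact lintegral_sub_right_eq_self (fun z : EuclideanSpace ℝ (Fin 3) =>
      ENNReal.ofReal (min 1 (C_A ^ 2 * ((1 + ‖z‖) * ‖z‖) ^ 2) / ‖z‖ ^ (3 + 2 * s))) y
  simp_rw [hinner]
  rw [lintegral_mul_const' _ _ hIψ.ne]
  exact (ENNReal.mul_lt_top (weight_finite hs0 hs1 hCw w hdecay) hIψ).ne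

end helpers4

/-- Vanishing of the magnetic phase discrepancy: for `A` Hölder continuous and a
polynomially decaying `w`,
`X_ε = ∬ w(y)² |e^{i[A(ε(x+y)/2) − A(0)]·(x−y)} − 1|²/|x−y|^{3+2s} dx dy → 0`
as `ε → 0⁺`. -/
theorem magnetic_phase_discrepancy_tendsto_zero
    (s α β C_A C_w : ℝ) (hs : s ∈ Set.Ioo (0 : ℝ) 1) (hα : α ∈ Set.Ioc (0 : ℝ) 1)
    (hβ : 0 < β) (hβ' : β < α / (1 + α - s)) (hCA : 0 < C_A) (hCw : 0 < C_w)
    (A : EuclideanSpace ℝ (Fin 3) → EuclideanSpace ℝ (Fin 3))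
    (hA : ∀ x y, ‖A x - A y‖ ≤ C_A * ‖x - y‖ ^ α)
    (w : EuclideanSpace ℝ (Fin 3) → ℝ) (hw : Measurable w)
    (hdecay : ∀ y, |w y| ≤ C_w / (1 + ‖y‖) ^ (3 + 2 * s)) :
    Tendsto
      (fun ε : ℝ => ∫⁻ x, ∫⁻ y,
        ENNReal.ofReal ((w y) ^ 2 *
          ‖Complex.exp (Complex.I *
              ((inner ℝ (A ((ε / 2) • (x + y)) - A 0) (x - y) : ℝ) : ℂ)) - 1‖ ^ 2 /
          ‖x - y‖ ^ (3 + 2 * s)))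
      (nhdsWithin 0 (Set.Ioi 0)) (nhds 0) := by
  obtain ⟨hs0, hs1⟩ := hs
  obtain ⟨hα0, hα1⟩ := hα
  have hAc : Continuous A := by
    rw [continuous_iff_continuousAt]
    intro x
    rw [ContinuousAt, tendsto_iff_norm_sub_tendsto_zero]
    have h1 : Tendsto (fun y : EuclideanSpace ℝ (Fin 3) => ‖y - x‖) (nhds x) (nhds 0) := by
      have hc : Continuous fun y : EuclideanSpace ℝ (Fin 3) => ‖y - x‖ :=
        (continuous_id.sub continuous_const).norm
      simpa using hc.tendsto x
    have h2 := h1.rpow_const (Or.inr hα0.le)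
    rw [Real.zero_rpow hα0.ne'] at h2
    have hb := h2.const_mul C_A
    rw [mul_zero] at hb
    refine squeeze_zero_norm (fun y => ?_) hb
    rw [norm_norm]
    exact hA y x
  have hmain := tendsto_lintegral_filter_of_dominated_convergence
    (μ := (volume : Measure (EuclideanSpace ℝ (Fin 3))).prod volume)
    (l := nhdsWithin (0:ℝ) (Set.Ioi 0))
    (F := fun (ε : ℝ) (p : EuclideanSpace ℝ (Fin 3) × EuclideanSpace ℝ (Fin 3)) =>
      ENNReal.ofReal ((w p.2) ^ 2 *
        ‖Complex.exp (Complex.I *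
            ((inner ℝ (A ((ε / 2) • (p.1 + p.2)) - A 0) (p.1 - p.2) : ℝ) : ℂ)) - 1‖ ^ 2 /
        ‖p.1 - p.2‖ ^ (3 + 2 * s)))
    (f := fun _ : EuclideanSpace ℝ (Fin 3) × EuclideanSpace ℝ (Fin 3) => (0 : ℝ≥0∞))
    (fun p : EuclideanSpace ℝ (Fin 3) × EuclideanSpace ℝ (Fin 3) =>
      ENNReal.ofReal ((4 * w p.2 ^ 2 * (1 + ‖p.2‖) ^ 2) *
        (min 1 (C_A ^ 2 * ((1 + ‖p.1 - p.2‖) * ‖p.1 - p.2‖) ^ 2) /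
          ‖p.1 - p.2‖ ^ (3 + 2 * s))))
    (Eventually.of_forall fun ε => F_measurable (α := α) (C_A := C_A) hs0 A hAc w hw ε)
    (by
      filter_upwards [Ioc_mem_nhdsGT_of_mem (Set.mem_Ico.mpr ⟨le_refl (0:ℝ), one_pos⟩)]
        with ε hε
      exact Eventually.of_forall fun p =>
        dom_ineq hs0 hα0 hα1 hCA A hA w hε.1 hε.2 p.1 p.2)
    (bound_finite hs0 hs1 hCA hCw w hw hdecay)
    (Eventually.of_forall fun p => F_tendsto (s := s) (C_A := C_A) hα0 A hA w p.1 p.2)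
  rw [lintegral_zero] at hmain
  refine Tendsto.congr (fun ε => ?_) hmain
  exact lintegral_prod _ (F_measurable (α := α) (C_A := C_A) hs0 A hAc w hw ε).aemeasurable
end
end

section
/- Let z, w ∈ ℂ, θ ∈ ℝ and let p, q ≥ 0 be real numbers. Then Re[ (z − w e^{iθ}) ( conj(z) p − conj(w) q e^{−iθ} ) ] ≥ (|z| − |w|) (|z| p − |w| q). -/
noncomputable section

open Complex

lemma moser_aux (a b : ℂ) (p q : ℝ) (hp : 0 ≤ p) (hq : 0 ≤ q) :
    (‖a‖ - ‖b‖) * (‖a‖ * p - ‖b‖ * q) ≤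
      ((a - b) * ((starRingEnd ℂ) a * (p : ℂ) - (starRingEnd ℂ) b * (q : ℂ))).re := by
  have h1 : (a * (starRingEnd ℂ) a).re = ‖a‖ ^ 2 := by
    rw [Complex.mul_conj]; simp [Complex.sq_norm]
  have h2 : (b * (starRingEnd ℂ) b).re = ‖b‖ ^ 2 := by
    rw [Complex.mul_conj]; simp [Complex.sq_norm]
  have h3 : (b * (starRingEnd ℂ) a).re = (a * (starRingEnd ℂ) b).re := by
    rw [← Complex.conj_re (a * (starRingEnd ℂ) b)]
    simp [map_mul, mul_comm]
  have ht : (a * (starRingEnd ℂ) b).re ≤ ‖a‖ * ‖b‖ := by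
    calc (a * (starRingEnd ℂ) b).re ≤ ‖a * (starRingEnd ℂ) b‖ :=
          Complex.re_le_norm _
      _ = ‖a‖ * ‖b‖ := by rw [norm_mul, Complex.norm_conj]
  have hexp : ((a - b) * ((starRingEnd ℂ) a * (p : ℂ) - (starRingEnd ℂ) b * (q : ℂ))).re
      = ‖a‖ ^ 2 * p + ‖b‖ ^ 2 * q
        - (a * (starRingEnd ℂ) b).re * (p + q) := by
    have e : (a - b) * ((starRingEnd ℂ) a * (p : ℂ) - (starRingEnd ℂ) b * (q : ℂ))
        = (a * (starRingEnd ℂ) a) * (p : ℂ) + (b * (starRingEnd ℂ) b) * (q : ℂ)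
          - (a * (starRingEnd ℂ) b) * (q : ℂ) - (b * (starRingEnd ℂ) a) * (p : ℂ) := by
      ring
    rw [e]
    simp only [Complex.sub_re, Complex.add_re, Complex.mul_re, Complex.ofReal_re,
      Complex.ofReal_im, mul_zero, sub_zero]
    rw [show ‖a‖ ^ 2 = a.re ^ 2 + a.im ^ 2 by
        rw [Complex.sq_norm, Complex.normSq_apply]; ring,
      show ‖b‖ ^ 2 = b.re ^ 2 + b.im ^ 2 by
        rw [Complex.sq_norm, Complex.normSq_apply]; ring]
    simp only [Complex.conj_re, Complex.conj_im]
    ring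
  rw [hexp]
  nlinarith [sq_nonneg (‖a‖ - ‖b‖), norm_nonneg a,
    norm_nonneg b, mul_le_mul_of_nonneg_right ht (add_nonneg hp hq)]

/-- Pointwise inequality for the Moser iteration with the fractional magnetic
operator:
`Re[(z − w e^{iθ})(z̄ p − w̄ q e^{−iθ})] ≥ (|z| − |w|)(|z| p − |w| q)` for `p, q ≥ 0`. -/
theorem moser_pointwise_inequality
    (z w : ℂ) (θ p q : ℝ) (hp : 0 ≤ p) (hq : 0 ≤ q) :
    (‖z‖ - ‖w‖) * (‖z‖ * p - ‖w‖ * q) ≤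
      ((z - w * Complex.exp ((θ : ℂ) * Complex.I)) *
        ((starRingEnd ℂ) z * (p : ℂ) -
          (starRingEnd ℂ) w * (q : ℂ) * Complex.exp (-(θ : ℂ) * Complex.I))).re := by
  have hconj : (starRingEnd ℂ) (w * Complex.exp ((θ : ℂ) * Complex.I))
      = (starRingEnd ℂ) w * Complex.exp (-(θ : ℂ) * Complex.I) := by
    rw [map_mul, ← Complex.exp_conj]
    congr 1
    simp [map_mul, Complex.conj_I]
  have habs : ‖w * Complex.exp ((θ : ℂ) * Complex.I)‖ = ‖w‖ := by
    rw [norm_mul, Complex.norm_exp_ofReal_mul_I, mul_one]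
  have := moser_aux z (w * Complex.exp ((θ : ℂ) * Complex.I)) p q hp hq
  rw [hconj, habs] at this
  convert this using 3
  ring
end
end

section
/- Let L > 0 and β ≥ 1. Define for t ≥ 0 the functions γ(t) = t · (min(t, L))^{2(β−1)} and Γ(t) = (√(2β−1)/β) · (min(t, L))^β + max(t − L, 0) · L^{β−1}. Then for all a, b ≥ 0, (a − b)(γ(a) − γ(b)) ≥ (Γ(a) − Γ(b))². -/
noncomputable section


open MeasureTheory Set

lemma my_cs (b a : ℝ) (hba : b ≤ a) (g : ℝ → ℝ)
    (hmeas : Measurable g) (hg : ∀ t ∈ Set.Ioc b a, 0 ≤ g t) (C : ℝ)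
    (hC : ∀ t ∈ Set.Ioc b a, g t ≤ C) :
    (∫ t in b..a, g t) ^ 2 ≤ (a - b) * ∫ t in b..a, (g t) ^ 2 := by
  set μ := volume.restrict (Set.Ioc b a) with hμ
  haveI : IsFiniteMeasure μ := ⟨by rw [hμ, Measure.restrict_apply_univ]; exact measure_Ioc_lt_top⟩
  have hae : ∀ᵐ t ∂μ, t ∈ Set.Ioc b a := ae_restrict_mem measurableSet_Ioc
  have hgnn : 0 ≤ᵐ[μ] g := hae.mono hg
  have hmem : MemLp g (ENNReal.ofReal 2) μ :=
    MemLp.of_bound hmeas.aestronglyMeasurable (max C 0) <| by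
      filter_upwards [hae] with t ht
      rw [Real.norm_of_nonneg (hg t ht)]
      exact le_max_of_le_left (hC t ht)
  have hone : MemLp (fun _ : ℝ => (1 : ℝ)) (ENNReal.ofReal 2) μ := memLp_const 1
  have hpq : Real.HolderConjugate 2 2 := Real.HolderConjugate.two_two
  have H := integral_mul_le_Lp_mul_Lq_of_nonneg hpq hgnn
    (Filter.Eventually.of_forall fun _ => zero_le_one) hmem hone
  simp only [mul_one, Real.one_rpow] at H
  have hμuniv : ∫ _ : ℝ, (1 : ℝ) ∂μ = a - b := by
    rw [integral_const, smul_eq_mul, mul_one, hμ, measureReal_def, Measure.restrict_apply_univ,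
      Real.volume_Ioc, ENNReal.toReal_ofReal (by linarith)]
  have hsq : ∀ x : ℝ, x ^ (2 : ℝ) = x ^ 2 := fun x => by
    rw [show (2 : ℝ) = ((2 : ℕ) : ℝ) by norm_num, Real.rpow_natCast]
  simp only [hsq] at H
  rw [hμuniv] at H
  have hA : 0 ≤ ∫ t, g t ^ 2 ∂μ := integral_nonneg fun t => sq_nonneg _
  have hI : 0 ≤ ∫ t, g t ∂μ := integral_nonneg_of_ae hgnn
  have h2 : (∫ t, g t ∂μ) ^ 2 ≤ ((∫ t, g t ^ 2 ∂μ) ^ ((1:ℝ)/2) * (a - b) ^ ((1:ℝ)/2)) ^ 2 :=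
    pow_le_pow_left₀ hI H 2
  have hrw : ∀ x : ℝ, 0 ≤ x → (x ^ ((1:ℝ)/2)) ^ 2 = x := fun x hx => by
    rw [← Real.rpow_natCast (x ^ ((1:ℝ)/2)) 2, ← Real.rpow_mul hx]
    norm_num
  rw [mul_pow, hrw _ hA, hrw _ (by linarith : (0:ℝ) ≤ a - b)] at h2
  rw [intervalIntegral.integral_of_le hba, intervalIntegral.integral_of_le hba]
  calc (∫ t in Set.Ioc b a, g t) ^ 2 ≤ (∫ t, g t ^ 2 ∂μ) * (a - b) := h2
    _ = (a - b) * ∫ t in Set.Ioc b a, g t ^ 2 := by rw [mul_comm]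

lemma my_key (L β : ℝ) (hL : 0 < L) (hβ : 1 ≤ β) (a b : ℝ) (hb : 0 ≤ b) (hba : b ≤ a) :
    ((Real.sqrt (2 * β - 1) / β) * min a L ^ β + max (a - L) 0 * L ^ (β - 1) -
        ((Real.sqrt (2 * β - 1) / β) * min b L ^ β + max (b - L) 0 * L ^ (β - 1))) ^ 2 ≤
      (a - b) *
        (a * min a L ^ (2 * (β - 1)) - b * min b L ^ (2 * (β - 1))) := by
  have hβ0 : (0:ℝ) < β := by linarith
  have h2β : (0:ℝ) ≤ 2 * β - 1 := by linarith
  have hβ1 : (0:ℝ) ≤ β - 1 := by linarith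
  set c : ℝ := Real.sqrt (2 * β - 1) / β with hc
  set g : ℝ → ℝ := fun t => if t < L then Real.sqrt (2 * β - 1) * t ^ (β - 1) else L ^ (β - 1)
    with hgdef
  set Γ : ℝ → ℝ := fun t => c * min t L ^ β + max (t - L) 0 * L ^ (β - 1) with hΓdef
  set γ : ℝ → ℝ := fun t => t * min t L ^ (2 * (β - 1)) with hγdef
  -- continuity of rpow with nonneg exponent
  have hrpow_cont : ∀ e : ℝ, 0 ≤ e → Continuous fun x : ℝ => x ^ e := fun e he =>
    continuous_iff_continuousAt.2 fun x => Real.continuousAt_rpow_const x e (Or.inr he)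
  have hmin : Continuous fun t : ℝ => min t L := continuous_id.min continuous_const
  have hΓcont : Continuous Γ := by
    apply Continuous.add
    · exact continuous_const.mul ((hrpow_cont β hβ0.le).comp hmin)
    · exact (((continuous_id.sub continuous_const).max continuous_const).mul continuous_const)
  have hγcont : Continuous γ :=
    continuous_id.mul ((hrpow_cont _ (by linarith)).comp hmin)
  -- measurability of g
  have hgmeas : Measurable g := by
    apply Measurable.ite measurableSet_Iio
    · exact (continuous_const.mul (hrpow_cont _ hβ1)).measurable
    · exact measurable_const
  -- pointwise bounds
  have hone_le : (1:ℝ) ≤ Real.sqrt (2 * β - 1) := by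
    calc (1:ℝ) = Real.sqrt 1 := (Real.sqrt_one).symm
      _ ≤ Real.sqrt (2 * β - 1) := Real.sqrt_le_sqrt (by linarith)
  set C : ℝ := Real.sqrt (2 * β - 1) * max a L ^ (β - 1) with hC
  have hCnn : 0 ≤ C :=
    mul_nonneg (Real.sqrt_nonneg _) (Real.rpow_nonneg (le_trans hL.le (le_max_right a L)) _)
  have hgnn : ∀ t ∈ Set.Ioc b a, 0 ≤ g t := by
    intro t ht
    have ht0 : 0 ≤ t := le_trans hb ht.1.le
    simp only [hgdef]
    split
    · exact mul_nonneg (Real.sqrt_nonneg _) (Real.rpow_nonneg ht0 _)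
    · exact Real.rpow_nonneg hL.le _
  have hgle : ∀ t ∈ Set.Ioc b a, g t ≤ C := by
    intro t ht
    have ht0 : 0 ≤ t := le_trans hb ht.1.le
    simp only [hgdef, hC]
    split
    · apply mul_le_mul_of_nonneg_left _ (Real.sqrt_nonneg _)
      exact Real.rpow_le_rpow ht0 (le_max_of_le_left ht.2) hβ1
    · calc L ^ (β-1) ≤ max a L ^ (β-1) :=
            Real.rpow_le_rpow hL.le (le_max_right _ _) hβ1
        _ ≤ Real.sqrt (2*β-1) * max a L ^ (β-1) := by
            nlinarith [Real.rpow_nonneg (le_trans hL.le (le_max_right a L)) (β-1)]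
  -- interval integrability
  have hIoc : Set.uIoc b a = Set.Ioc b a := Set.uIoc_of_le hba
  haveI : IsFiniteMeasure (volume.restrict (Set.Ioc b a)) :=
    ⟨by rw [Measure.restrict_apply_univ]; exact measure_Ioc_lt_top⟩
  have hint_of_bdd : ∀ (f : ℝ → ℝ) (D : ℝ), Measurable f →
      (∀ t ∈ Set.Ioc b a, ‖f t‖ ≤ D) → IntervalIntegrable f volume b a := by
    intro f D hf hfb
    rw [intervalIntegrable_iff, hIoc]
    refine ⟨hf.aestronglyMeasurable, HasFiniteIntegral.of_bounded (C := D) ?_⟩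
    filter_upwards [ae_restrict_mem measurableSet_Ioc] with t ht
    exact hfb t ht
  have hgint : IntervalIntegrable g volume b a :=
    hint_of_bdd g C hgmeas fun t ht => by
      rw [Real.norm_of_nonneg (hgnn t ht)]; exact hgle t ht
  have hg2int : IntervalIntegrable (fun t => (g t)^2) volume b a :=
    hint_of_bdd _ (C^2) (hgmeas.pow_const 2) fun t ht => by
      rw [Real.norm_of_nonneg (sq_nonneg _)]
      exact pow_le_pow_left₀ (hgnn t ht) (hgle t ht) 2
  -- right derivatives
  have hΓderiv : ∀ t ∈ Set.Ioo b a, HasDerivWithinAt Γ (g t) (Set.Ioi t) t := by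
    intro t ht
    have ht0 : 0 < t := lt_of_le_of_lt hb ht.1
    by_cases htL : t < L
    · have h1 : HasDerivAt (fun s : ℝ => c * s ^ β) (c * (β * t ^ (β - 1))) t :=
        (Real.hasDerivAt_rpow_const (Or.inl ht0.ne')).const_mul c
      have heq : Set.EqOn Γ (fun s : ℝ => c * s ^ β) (Set.Iio L) := by
        intro s hs
        have hsL : s < L := hs
        simp only [hΓdef, min_eq_left hsL.le,
          max_eq_right (by linarith : s - L ≤ 0), zero_mul, add_zero]
      have h2 : HasDerivAt Γ (c * (β * t ^ (β - 1))) t :=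
        h1.congr_of_eventuallyEq (Filter.eventuallyEq_of_mem (Iio_mem_nhds htL) heq)
      have hval : c * (β * t ^ (β - 1)) = g t := by
        simp only [hgdef, if_pos htL, hc]
        field_simp
      rw [hval] at h2
      exact h2.hasDerivWithinAt
    · push_neg at htL
      have h1 : HasDerivAt (fun s : ℝ => c * L ^ β + (s - L) * L ^ (β - 1)) (L ^ (β - 1)) t := by
        simpa using (((hasDerivAt_id t).sub_const L).mul_const (L ^ (β - 1))).const_add (c * L ^ β)
      have heq : ∀ s, L ≤ s → Γ s = c * L ^ β + (s - L) * L ^ (β - 1) := by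
        intro s hs
        simp only [hΓdef, min_eq_right hs, max_eq_left (by linarith : (0:ℝ) ≤ s - L)]
      have hgt : g t = L ^ (β - 1) := if_neg (not_lt.2 htL)
      rw [hgt]
      exact h1.hasDerivWithinAt.congr
        (fun s hs => heq s (le_trans htL (le_of_lt hs))) (heq t htL)
  have hγderiv : ∀ t ∈ Set.Ioo b a, HasDerivWithinAt γ ((g t)^2) (Set.Ioi t) t := by
    intro t ht
    have ht0 : 0 < t := lt_of_le_of_lt hb ht.1
    by_cases htL : t < L
    · have h1 : HasDerivAt (fun s : ℝ => s ^ (2*β - 1)) ((2*β-1) * t ^ (2*β - 1 - 1)) t :=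
        Real.hasDerivAt_rpow_const (Or.inl ht0.ne')
      have heq : Set.EqOn γ (fun s : ℝ => s ^ (2*β - 1)) (Set.Ioo 0 L) := by
        intro s hs
        simp only [hγdef, min_eq_left hs.2.le]
        rw [show (2*β - 1) = 1 + 2*(β-1) by ring, Real.rpow_add hs.1, Real.rpow_one]
      have h2 : HasDerivAt γ ((2*β-1) * t ^ (2*β - 1 - 1)) t :=
        h1.congr_of_eventuallyEq
          (Filter.eventuallyEq_of_mem (Ioo_mem_nhds ht0 htL) heq)
      have hval : (2*β-1) * t ^ (2*β - 1 - 1) = (g t)^2 := by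
        simp only [hgdef, if_pos htL, mul_pow, Real.sq_sqrt h2β]
        congr 1
        rw [← Real.rpow_natCast (t ^ (β-1)) 2, ← Real.rpow_mul ht0.le]
        congr 1
        push_cast
        ring
      rw [hval] at h2
      exact h2.hasDerivWithinAt
    · push_neg at htL
      have h1 : HasDerivAt (fun s : ℝ => s * L ^ (2*(β-1))) (L ^ (2*(β-1))) t := by
        simpa using (hasDerivAt_id t).mul_const (L ^ (2*(β-1)))
      have heq : ∀ s, L ≤ s → γ s = s * L ^ (2*(β-1)) := by
        intro s hs
        simp only [hγdef, min_eq_right hs]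
      have hgt : (g t)^2 = L ^ (2*(β-1)) := by
        simp only [hgdef, if_neg (not_lt.2 htL)]
        rw [← Real.rpow_natCast (L ^ (β-1)) 2, ← Real.rpow_mul hL.le]
        congr 1
        push_cast
        ring
      rw [hgt]
      exact h1.hasDerivWithinAt.congr
        (fun s hs => heq s (le_trans htL (le_of_lt hs))) (heq t htL)
  -- FTC
  have hΓftc : ∫ t in b..a, g t = Γ a - Γ b :=
    intervalIntegral.integral_eq_sub_of_hasDeriv_right_of_le hba hΓcont.continuousOn
      hΓderiv hgint
  have hγftc : ∫ t in b..a, (g t)^2 = γ a - γ b :=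
    intervalIntegral.integral_eq_sub_of_hasDeriv_right_of_le hba hγcont.continuousOn
      hγderiv hg2int
  have := my_cs b a hba g hgmeas hgnn C hgle
  rw [hΓftc, hγftc] at this
  simpa [hΓdef, hγdef, hc] using this


/-- For the truncation `γ(t) = t (min(t,L))^{2(β−1)}` and
`Γ(t) = (√(2β−1)/β)(min(t,L))^β + max(t−L,0) L^{β−1}`, one has
`(a − b)(γ(a) − γ(b)) ≥ (Γ(a) − Γ(b))²` for all `a, b ≥ 0`. -/
theorem truncation_gamma_inequality
    (L β : ℝ) (hL : 0 < L) (hβ : 1 ≤ β) (a b : ℝ) (ha : 0 ≤ a) (hb : 0 ≤ b) :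
    ((Real.sqrt (2 * β - 1) / β) * min a L ^ β + max (a - L) 0 * L ^ (β - 1) -
        ((Real.sqrt (2 * β - 1) / β) * min b L ^ β + max (b - L) 0 * L ^ (β - 1))) ^ 2 ≤
      (a - b) *
        (a * min a L ^ (2 * (β - 1)) - b * min b L ^ (2 * (β - 1))) := by
  rcases le_total b a with hba | hab
  · exact my_key L β hL hβ a b hb hba
  · have h := my_key L β hL hβ b a ha hab
    calc _ = ((Real.sqrt (2 * β - 1) / β) * min b L ^ β + max (b - L) 0 * L ^ (β - 1) -
        ((Real.sqrt (2 * β - 1) / β) * min a L ^ β + max (a - L) 0 * L ^ (β - 1))) ^ 2 := by ring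
      _ ≤ (b - a) * (b * min b L ^ (2 * (β - 1)) - a * min a L ^ (2 * (β - 1))) := h
      _ = (a - b) * (a * min a L ^ (2 * (β - 1)) - b * min b L ^ (2 * (β - 1))) := by ring
end
end

section
/- Let z, w ∈ ℂ, θ ∈ ℝ, δ > 0 and let φ₁, φ₂ ≥ 0 be real numbers. Then Re[ (z − w e^{iθ}) ( (conj(z)/√(|z|²+δ²)) φ₁ − (conj(w)/√(|w|²+δ²)) φ₂ e^{−iθ} ) ] ≥ (|z|/√(|z|²+δ²)) (|z| − |w|) (φ₁ − φ₂). -/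
noncomputable section

/-- Pointwise Kato-type inequality: for `φ₁, φ₂ ≥ 0` and `δ > 0`,
`Re[(z − w e^{iθ})(z̄/√(|z|²+δ²) φ₁ − w̄/√(|w|²+δ²) φ₂ e^{−iθ})]
  ≥ (|z|/√(|z|²+δ²))(|z| − |w|)(φ₁ − φ₂)`. -/
theorem kato_pointwise_inequality
    (z w : ℂ) (θ δ φ₁ φ₂ : ℝ) (hδ : 0 < δ) (h1 : 0 ≤ φ₁) (h2 : 0 ≤ φ₂) :
    ‖z‖ / Real.sqrt (‖z‖ ^ 2 + δ ^ 2) *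
        (‖z‖ - ‖w‖) * (φ₁ - φ₂) ≤
      ((z - w * Complex.exp ((θ : ℂ) * Complex.I)) *
        ((starRingEnd ℂ) z / (Real.sqrt (‖z‖ ^ 2 + δ ^ 2) : ℂ) * (φ₁ : ℂ) -
          (starRingEnd ℂ) w / (Real.sqrt (‖w‖ ^ 2 + δ ^ 2) : ℂ) * (φ₂ : ℂ) *
            Complex.exp (-(θ : ℂ) * Complex.I))).re := by
  set a := ‖z‖ with ha
  set b := ‖w‖ with hb
  set Sz := Real.sqrt (a ^ 2 + δ ^ 2) with hSzdef
  set Sw := Real.sqrt (b ^ 2 + δ ^ 2) with hSwdef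
  have ha0 : 0 ≤ a := norm_nonneg z
  have hb0 : 0 ≤ b := norm_nonneg w
  have hSz : 0 < Sz := Real.sqrt_pos.mpr (by positivity)
  have hSw : 0 < Sw := Real.sqrt_pos.mpr (by positivity)
  have hSz2 : Sz ^ 2 = a ^ 2 + δ ^ 2 := Real.sq_sqrt (by positivity)
  have hSw2 : Sw ^ 2 = b ^ 2 + δ ^ 2 := Real.sq_sqrt (by positivity)
  set c := z * (starRingEnd ℂ) w * Complex.exp (-(θ : ℂ) * Complex.I) with hc
  have hz : z * (starRingEnd ℂ) z = ((a : ℂ)) ^ 2 := by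
    rw [Complex.mul_conj, Complex.normSq_eq_norm_sq]; push_cast; ring
  have hw : w * (starRingEnd ℂ) w = ((b : ℂ)) ^ 2 := by
    rw [Complex.mul_conj, Complex.normSq_eq_norm_sq]; push_cast; ring
  have hexp : Complex.exp ((θ : ℂ) * Complex.I) * Complex.exp (-(θ : ℂ) * Complex.I) = 1 := by
    rw [← Complex.exp_add]; ring_nf; exact Complex.exp_zero
  have hconj : (starRingEnd ℂ) c = (starRingEnd ℂ) z * w * Complex.exp ((θ : ℂ) * Complex.I) := by
    simp only [hc, map_mul, ← Complex.exp_conj, map_neg, Complex.conj_I, Complex.conj_ofReal,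
      RingHomCompTriple.comp_apply, RingHom.id_apply]
    ring_nf
  have hE : ((z - w * Complex.exp ((θ : ℂ) * Complex.I)) *
        ((starRingEnd ℂ) z / (Sz : ℂ) * (φ₁ : ℂ) -
          (starRingEnd ℂ) w / (Sw : ℂ) * (φ₂ : ℂ) *
            Complex.exp (-(θ : ℂ) * Complex.I)))
      = ((a ^ 2 / Sz * φ₁ + b ^ 2 / Sw * φ₂ : ℝ) : ℂ)
        - c * ((φ₂ / Sw : ℝ) : ℂ) - (starRingEnd ℂ) c * ((φ₁ / Sz : ℝ) : ℂ) := by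
    have hSz' : (Sz : ℂ) ≠ 0 := by exact_mod_cast hSz.ne'
    have hSw' : (Sw : ℂ) ≠ 0 := by exact_mod_cast hSw.ne'
    rw [hconj, hc]
    push_cast
    linear_combination ((φ₁ : ℂ) / Sz) * hz
      + ((φ₂ : ℂ) / Sw * Complex.exp ((θ:ℂ)*Complex.I) * Complex.exp (-(θ:ℂ)*Complex.I)) * hw
      + ((φ₂ : ℂ) / Sw * (b:ℂ)^2) * hexp
  rw [hE]
  have hre : (((a ^ 2 / Sz * φ₁ + b ^ 2 / Sw * φ₂ : ℝ) : ℂ)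
        - c * ((φ₂ / Sw : ℝ) : ℂ) - (starRingEnd ℂ) c * ((φ₁ / Sz : ℝ) : ℂ)).re
      = a ^ 2 / Sz * φ₁ + b ^ 2 / Sw * φ₂ - c.re * (φ₂ / Sw) - c.re * (φ₁ / Sz) := by
    simp [Complex.sub_re, Complex.mul_re, Complex.ofReal_re, Complex.ofReal_im, Complex.conj_re,
      Complex.conj_im, ← Complex.ofReal_pow]
  rw [hre]
  have hR : c.re ≤ a * b := by
    calc c.re ≤ ‖c‖ := Complex.re_le_norm c
    _ = a * b := by
        simp [hc, map_mul, Complex.norm_conj, Complex.norm_exp, ha, hb]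
  have mono : ∀ p q : ℝ, 0 ≤ p → 0 ≤ q → q ≤ p →
      q * Real.sqrt (p ^ 2 + δ ^ 2) ≤ p * Real.sqrt (q ^ 2 + δ ^ 2) := by
    intro p q hp hq hqp
    have e1 : q * Real.sqrt (p ^ 2 + δ ^ 2) = Real.sqrt (q ^ 2 * (p ^ 2 + δ ^ 2)) := by
      rw [Real.sqrt_mul (sq_nonneg q), Real.sqrt_sq hq]
    have e2 : p * Real.sqrt (q ^ 2 + δ ^ 2) = Real.sqrt (p ^ 2 * (q ^ 2 + δ ^ 2)) := by
      rw [Real.sqrt_mul (sq_nonneg p), Real.sqrt_sq hp]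
    rw [e1, e2]
    apply Real.sqrt_le_sqrt
    nlinarith [sq_nonneg δ, mul_self_le_mul_self hq hqp]
  have key : 0 ≤ (a / Sz - b / Sw) * (a - b) := by
    rcases le_total b a with h | h
    · apply mul_nonneg _ (by linarith)
      rw [sub_nonneg, div_le_div_iff₀ hSw hSz]
      exact mono a b ha0 hb0 h
    · rw [show (a / Sz - b / Sw) * (a - b) = (b / Sw - a / Sz) * (b - a) by ring]
      apply mul_nonneg _ (by linarith)
      rw [sub_nonneg, div_le_div_iff₀ hSz hSw]
      exact mono b a hb0 ha0 h
  have t1 : 0 ≤ (a * b - c.re) * (φ₁ / Sz) :=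
    mul_nonneg (sub_nonneg.2 hR) (div_nonneg h1 hSz.le)
  have t2 : 0 ≤ (a * b - c.re) * (φ₂ / Sw) :=
    mul_nonneg (sub_nonneg.2 hR) (div_nonneg h2 hSw.le)
  have t3 : 0 ≤ (a / Sz - b / Sw) * (a - b) * φ₂ := mul_nonneg key h2
  have hiden : a ^ 2 / Sz * φ₁ + b ^ 2 / Sw * φ₂ - c.re * (φ₂ / Sw) - c.re * (φ₁ / Sz)
      - a / Sz * (a - b) * (φ₁ - φ₂)
      = (a * b - c.re) * (φ₁ / Sz) + (a * b - c.re) * (φ₂ / Sw)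
        + (a / Sz - b / Sw) * (a - b) * φ₂ := by
    field_simp
    ring
  linarith [hiden, t1, t2, t3]
end
end

section
/- Let z, w ∈ ℂ, θ ∈ ℝ, δ > 0, K ≥ 0, M ≥ 0, and let φ₁, φ₂ be real numbers with |z| ≤ K, |w| ≤ K, |φ₁| ≤ M, |φ₂| ≤ M. Then | (z/√(|z|²+δ²)) φ₁ − (w/√(|w|²+δ²)) φ₂ e^{iθ} |² ≤ (4M²/δ²) |z − w e^{iθ}|² + (4K²/δ²) (φ₁ − φ₂)² + (4K²M²/δ⁴) (|z| − |w|)². -/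
noncomputable section

private lemma sum_three_sq_est (s u v t : ℝ) (hs0 : 0 ≤ s)
    (hs : s ≤ u + v + t) : s ^ 2 ≤ 4 * u ^ 2 + 4 * v ^ 2 + 4 * t ^ 2 := by
  nlinarith [sq_nonneg (u - v), sq_nonneg (u - t), sq_nonneg (v - t),
    sq_nonneg (u + v + t)]

/-- Pointwise estimate showing that `ψ_δ = (u/√(|u|²+δ²))φ` has finite magnetic
seminorm: with `|z|, |w| ≤ K` and `|φ₁|, |φ₂| ≤ M`,
`|(z/√(|z|²+δ²))φ₁ − (w/√(|w|²+δ²))φ₂ e^{iθ}|² ≤ (4M²/δ²)|z − w e^{iθ}|²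
  + (4K²/δ²)(φ₁−φ₂)² + (4K²M²/δ⁴)(|z|−|w|)²`. -/
theorem test_function_pointwise_estimate
    (z w : ℂ) (θ δ K M φ₁ φ₂ : ℝ) (hδ : 0 < δ) (hK : 0 ≤ K) (hM : 0 ≤ M)
    (hz : ‖z‖ ≤ K) (hw : ‖w‖ ≤ K)
    (h1 : |φ₁| ≤ M) (h2 : |φ₂| ≤ M) :
    ‖z / (Real.sqrt (‖z‖ ^ 2 + δ ^ 2) : ℂ) * (φ₁ : ℂ) -
        w / (Real.sqrt (‖w‖ ^ 2 + δ ^ 2) : ℂ) * (φ₂ : ℂ) *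
          Complex.exp ((θ : ℂ) * Complex.I)‖ ^ 2 ≤
      4 * M ^ 2 / δ ^ 2 *
          ‖z - w * Complex.exp ((θ : ℂ) * Complex.I)‖ ^ 2 +
        4 * K ^ 2 / δ ^ 2 * (φ₁ - φ₂) ^ 2 +
        4 * K ^ 2 * M ^ 2 / δ ^ 4 * (‖z‖ - ‖w‖) ^ 2 := by
  set A := ‖z‖ with hAdef
  set B := ‖w‖ with hBdef
  have hA : 0 ≤ A := norm_nonneg z
  have hB : 0 ≤ B := norm_nonneg w
  set a := Real.sqrt (A ^ 2 + δ ^ 2) with hadef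
  set b := Real.sqrt (B ^ 2 + δ ^ 2) with hbdef
  have ha2 : a ^ 2 = A ^ 2 + δ ^ 2 := Real.sq_sqrt (by positivity)
  have hb2 : b ^ 2 = B ^ 2 + δ ^ 2 := Real.sq_sqrt (by positivity)
  have ha0 : 0 < a := Real.sqrt_pos.2 (by positivity)
  have hb0 : 0 < b := Real.sqrt_pos.2 (by positivity)
  have haδ : δ ≤ a := by nlinarith
  have hbδ : δ ≤ b := by nlinarith
  set E := Complex.exp ((θ : ℂ) * Complex.I) with hEdef
  have hE : ‖E‖ = 1 := Complex.norm_exp_ofReal_mul_I θ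
  -- the key decomposition
  have key : z / (a : ℂ) * (φ₁ : ℂ) - w / (b : ℂ) * (φ₂ : ℂ) * E =
      ((φ₁ / a : ℝ) : ℂ) * (z - w * E) + (((φ₁ - φ₂) / a : ℝ) : ℂ) * (w * E) +
        ((φ₂ * (1 / a - 1 / b) : ℝ) : ℂ) * (w * E) := by
    push_cast
    field_simp
    ring
  set X := ‖z - w * E‖ with hXdef
  have hX : 0 ≤ X := norm_nonneg _
  -- bound on the sqrt difference
  have habmul : A * B + δ ^ 2 ≤ a * b := by
    have h1 : (A * B + δ ^ 2) ^ 2 ≤ (a * b) ^ 2 := by nlinarith [sq_nonneg (A - B)]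
    nlinarith [mul_pos ha0 hb0]
  have hdiff : |b - a| ≤ |A - B| := by
    rw [← Real.sqrt_sq_eq_abs, ← Real.sqrt_sq_eq_abs]
    apply Real.sqrt_le_sqrt
    nlinarith
  have hinv : |1 / a - 1 / b| ≤ |A - B| / δ ^ 2 := by
    have heq : 1 / a - 1 / b = (b - a) / (a * b) := by field_simp
    rw [heq, abs_div, abs_of_pos (mul_pos ha0 hb0)]
    rw [div_le_div_iff₀ (mul_pos ha0 hb0) (pow_pos hδ 2)]
    have hab : δ ^ 2 ≤ a * b :=
      le_trans (le_add_of_nonneg_left (mul_nonneg hA hB)) habmul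
    exact mul_le_mul hdiff hab (le_of_lt (pow_pos hδ 2)) (abs_nonneg _)
  -- triangle inequality
  have habs : ‖z / (a : ℂ) * (φ₁ : ℂ) - w / (b : ℂ) * (φ₂ : ℂ) * E‖ ≤
      |φ₁ / a| * X + |(φ₁ - φ₂) / a| * B + |φ₂ * (1 / a - 1 / b)| * B := by
    rw [key]
    refine le_trans (norm_add_le _ _) ?_
    gcongr
    · refine le_trans (norm_add_le _ _) ?_
      gcongr
      · rw [norm_mul, Complex.norm_real, Real.norm_eq_abs]
      · rw [norm_mul, Complex.norm_real, Real.norm_eq_abs, norm_mul, hE, mul_one]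
    · rw [norm_mul, Complex.norm_real, Real.norm_eq_abs, norm_mul, hE, mul_one]
  -- bound each term
  have ht1 : |φ₁ / a| * X ≤ M / δ * X := by
    have h : |φ₁ / a| ≤ M / δ := by
      rw [abs_div, abs_of_pos ha0]
      exact div_le_div₀ hM h1 hδ haδ
    exact mul_le_mul_of_nonneg_right h hX
  have ht2 : |(φ₁ - φ₂) / a| * B ≤ K / δ * |φ₁ - φ₂| := by
    rw [abs_div, abs_of_pos ha0]
    calc |φ₁ - φ₂| / a * B ≤ |φ₁ - φ₂| / δ * K := by
          apply mul_le_mul _ hw hB (by positivity)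
          exact div_le_div_of_nonneg_left (abs_nonneg _) hδ haδ
      _ = K / δ * |φ₁ - φ₂| := by ring
  have ht3 : |φ₂ * (1 / a - 1 / b)| * B ≤ K * M / δ ^ 2 * |A - B| := by
    rw [abs_mul]
    calc |φ₂| * |1 / a - 1 / b| * B ≤ M * (|A - B| / δ ^ 2) * K := by
          apply mul_le_mul _ hw hB (by positivity)
          exact mul_le_mul h2 hinv (abs_nonneg _) hM
      _ = K * M / δ ^ 2 * |A - B| := by ring
  set s := ‖z / (a : ℂ) * (φ₁ : ℂ) - w / (b : ℂ) * (φ₂ : ℂ) * E‖ with hsdef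
  have hs0 : 0 ≤ s := norm_nonneg _
  have hs : s ≤ M / δ * X + K / δ * |φ₁ - φ₂| + K * M / δ ^ 2 * |A - B| :=
    habs.trans (by linarith)
  have hPsq : |φ₁ - φ₂| ^ 2 = (φ₁ - φ₂) ^ 2 := sq_abs _
  have hQsq : |A - B| ^ 2 = (A - B) ^ 2 := sq_abs _
  have hfin : s ^ 2 ≤ 4 * M ^ 2 / δ ^ 2 * X ^ 2 + 4 * K ^ 2 / δ ^ 2 * (φ₁ - φ₂) ^ 2 +
      4 * K ^ 2 * M ^ 2 / δ ^ 4 * (A - B) ^ 2 := by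
    set u := M / δ * X with hu
    set v := K / δ * |φ₁ - φ₂| with hv
    set t := K * M / δ ^ 2 * |A - B| with htt
    have hu0 : 0 ≤ u := mul_nonneg (div_nonneg hM hδ.le) hX
    have hv0 : 0 ≤ v := mul_nonneg (div_nonneg hK hδ.le) (abs_nonneg _)
    have ht0 : 0 ≤ t :=
      mul_nonneg (div_nonneg (mul_nonneg hK hM) (pow_pos hδ 2).le) (abs_nonneg _)
    have e1 : 4 * M ^ 2 / δ ^ 2 * X ^ 2 = 4 * u ^ 2 := by rw [hu]; ring
    have e2 : 4 * K ^ 2 / δ ^ 2 * (φ₁ - φ₂) ^ 2 = 4 * v ^ 2 := by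
      rw [hv, mul_pow, sq_abs]; ring
    have e3 : 4 * K ^ 2 * M ^ 2 / δ ^ 4 * (A - B) ^ 2 = 4 * t ^ 2 := by
      rw [htt, mul_pow, sq_abs]; ring
    rw [e1, e2, e3]
    exact sum_three_sq_est s u v t hs0 hs
  exact hfin
end
end
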